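/- arXiv:2406.19259 — 2 statements merged into one kernel-verified Lean document; each statement's English description precedes it below -/
import Mathlib

section
/- Hardy's inequalities: let k ∈ ℝ, L > 0, and let g : (0, L] → ℝ be continuously differentiable with ∫_0^L s^k ( |g(s)|²/L² + |g'(s)|² ) ds < ∞. Then there is a constant 0 < C < ∞, depending only on k and independent of L and ω, such that: (a) if k > 1, then ∫_0^L s^{k−2} |g(s)|² ds ≤ C ∫_0^L s^k ( |g(s)|²/L² + |g'(s)|² ) ds; (b) if k < 1, then g has a (finite) limit g(0) as s → 0⁺ and ∫_0^L s^{k−2} |g(s) − g(0)|² ds ≤ C ∫_0^L s^k |g'(s)|² ds; (c) if k > 1, then for every ω ∈ (0, 1), ∫_0^ω s^{k−2} |g(s)|² ds ≤ C ω^{−2} ∫_0^ω s^k |g(s)|² ds + C ω² ∫_0^ω s^{k−2} |g'(s)|² ds, provided the right-hand side is finite. -/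
/- Common framework for the free-boundary compressible primitive equations (FB-CPE)
   on Ω = 𝕋² × (0,1).  Fields are represented by functions of (t, x, y, z) (resp. (t, x, y)),
   periodic of period 1 in the horizontal variables x, y; the torus integrals are taken
   over the fundamental domain [0,1]². -/

noncomputable section

open Real MeasureTheory Filter Set intervalIntegral

namespace FBCPE

/-- Scalar fields on time × Ω, with arguments `t x y z`. -/
abbrev F : Type := ℝ → ℝ → ℝ → ℝ → ℝ

/-- Scalar fields on time × 𝕋² (interface quantities), with arguments `t x y`. -/
abbrev G : Type := ℝ → ℝ → ℝ → ℝ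

/-- partial derivatives of bulk fields -/
def pt (f : F) : F := fun t x y z => deriv (fun s => f s x y z) t
def px (f : F) : F := fun t x y z => deriv (fun s => f t s y z) x
def py (f : F) : F := fun t x y z => deriv (fun s => f t x s z) y
def pz (f : F) : F := fun t x y z => deriv (fun s => f t x y s) z

/-- partial derivatives of interface fields -/
def qt (Z : G) : G := fun t x y => deriv (fun s => Z s x y) t
def qx (Z : G) : G := fun t x y => deriv (fun s => Z t s y) x
def qy (Z : G) : G := fun t x y => deriv (fun s => Z t x s) y

/-- integral over Ω = 𝕋² × (0,1) (fundamental domain [0,1]³) -/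
def I3 (f : ℝ → ℝ → ℝ → ℝ) : ℝ :=
  ∫ x in (0:ℝ)..1, ∫ y in (0:ℝ)..1, ∫ z in (0:ℝ)..1, f x y z

/-- integral over 𝕋² (fundamental domain [0,1]²) -/
def I2 (f : ℝ → ℝ → ℝ) : ℝ := ∫ x in (0:ℝ)..1, ∫ y in (0:ℝ)..1, f x y

/-- squared L²(Ω)-norm at time `t`, with weight `z^w` (i.e. ‖z^{w/2} f‖²_{L²}) -/
def L2WSq (w : ℝ) (f : F) (t : ℝ) : ℝ := I3 fun x y z => z ^ w * (f t x y z) ^ 2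

/-- squared L²(Ω)-norm at time `t` -/
def L2Sq (f : F) (t : ℝ) : ℝ := I3 fun x y z => (f t x y z) ^ 2

/-- squared L²-norm of an interface field (equivalently its L²(Ω)-norm) -/
def L2Sq2 (Z : G) (t : ℝ) : ℝ := I2 fun x y => (Z t x y) ^ 2

/-- iterated horizontal derivatives ∂_x^i ∂_y^j -/
def hD (i j : ℕ) (f : F) : F := px^[i] (py^[j] f)

/-- iterated spatial derivatives ∂_x^i ∂_y^j ∂_z^k -/
def D3 (i j k : ℕ) (f : F) : F := px^[i] (py^[j] (pz^[k] f))

/-- iterated horizontal derivatives of interface fields -/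
def hD2 (i j : ℕ) (Z : G) : G := qx^[i] (qy^[j] Z)

/-- squared weighted horizontal Sobolev norm ‖z^{w/2} f‖²_{H^s_h} -/
def HhWSq (w : ℝ) (s : ℕ) (f : F) (t : ℝ) : ℝ :=
  ∑ p ∈ (Finset.range (s+1) ×ˢ Finset.range (s+1)).filter (fun p => p.1 + p.2 ≤ s),
    L2WSq w (hD p.1 p.2 f) t

/-- squared H^s(Ω) norm -/
def HSq (s : ℕ) (f : F) (t : ℝ) : ℝ :=
  ∑ p ∈ (((Finset.range (s+1) ×ˢ Finset.range (s+1)) ×ˢ Finset.range (s+1)).filter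
      (fun p => p.1.1 + p.1.2 + p.2 ≤ s)),
    L2Sq (D3 p.1.1 p.1.2 p.2 f) t

/-- squared H^s norm of an interface field -/
def HSq2 (s : ℕ) (Z : G) (t : ℝ) : ℝ :=
  ∑ p ∈ (Finset.range (s+1) ×ˢ Finset.range (s+1)).filter (fun p => p.1 + p.2 ≤ s),
    L2Sq2 (hD2 p.1 p.2 Z) t

/-- vector versions for v = (v1, v2) -/
def VL2WSq (w : ℝ) (v1 v2 : F) (t : ℝ) : ℝ := L2WSq w v1 t + L2WSq w v2 t
def VL2Sq (v1 v2 : F) (t : ℝ) : ℝ := L2Sq v1 t + L2Sq v2 t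
def VHhWSq (w : ℝ) (s : ℕ) (v1 v2 : F) (t : ℝ) : ℝ := HhWSq w s v1 t + HhWSq w s v2 t
def VHSq (s : ℕ) (v1 v2 : F) (t : ℝ) : ℝ := HSq s v1 t + HSq s v2 t

/-- ‖∇_h f‖²_{H^s(Ω)} -/
def gradhHSq (s : ℕ) (f : F) (t : ℝ) : ℝ := HSq s (px f) t + HSq s (py f) t
/-- ‖∇ f‖²_{H^s(Ω)} -/
def gradHSq (s : ℕ) (f : F) (t : ℝ) : ℝ := HSq s (px f) t + HSq s (py f) t + HSq s (pz f) t
def VgradhHSq (s : ℕ) (v1 v2 : F) (t : ℝ) : ℝ := gradhHSq s v1 t + gradhHSq s v2 t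
def VgradHSq (s : ℕ) (v1 v2 : F) (t : ℝ) : ℝ := gradHSq s v1 t + gradHSq s v2 t
/-- ‖∇_h Z‖²_{H^s} -/
def gradhHSq2 (s : ℕ) (Z : G) (t : ℝ) : ℝ := HSq2 s (qx Z) t + HSq2 s (qy Z) t
/-- ‖∇_h Z‖²_{L²} -/
def gradhSq2 (Z : G) (t : ℝ) : ℝ := L2Sq2 (qx Z) t + L2Sq2 (qy Z) t
/-- ‖z^{w/2} ∇_h v‖²_{H^s_h} -/
def VgradhHhWSq (w : ℝ) (s : ℕ) (v1 v2 : F) (t : ℝ) : ℝ :=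
  HhWSq w s (px v1) t + HhWSq w s (py v1) t + HhWSq w s (px v2) t + HhWSq w s (py v2) t

/-- the total energy functional ℰ(t) -/
def calE (α : ℝ) (Z : G) (v1 v2 : F) (t : ℝ) : ℝ :=
  VHhWSq α 2 v1 v2 t + VL2WSq α (pt v1) (pt v2) t + VHhWSq α 1 (pz v1) (pz v2) t
    + VHSq 1 v1 v2 t + HSq2 2 (fun t x y => Z t x y - 1) t + L2Sq2 (qt Z) t

/-- the dissipation combination
‖Z−1‖²_{H²} + ‖∂_t Z‖²_{L²} + ‖∇v‖²_{H¹} + ‖∇_h v‖²_{H²} + ‖z^{α/2}∂_t v‖²_{L²} + ‖∇∂_t v‖²_{L²} -/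
def dissCombo (α : ℝ) (Z : G) (v1 v2 : F) (t : ℝ) : ℝ :=
  HSq2 2 (fun t x y => Z t x y - 1) t + L2Sq2 (qt Z) t
    + VgradHSq 1 v1 v2 t + VgradhHSq 2 v1 v2 t
    + VL2WSq α (pt v1) (pt v2) t + VgradHSq 0 (pt v1) (pt v2) t

/-- horizontal divergence -/
def divh (v1 v2 : F) : F := fun t x y z => px v1 t x y z + py v2 t x y z

/-- vertical average of ξ^α f -/
def avg (α : ℝ) (f : F) : G := fun t x y => ∫ ξ in (0:ℝ)..1, ξ ^ α * f t x y ξ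

/-- partial vertical integral of ξ^α f -/
def cum (α : ℝ) (f : F) : F := fun t x y z => ∫ ξ in (0:ℝ)..z, ξ ^ α * f t x y ξ

/-- left-hand side of the horizontal momentum equations -/
def momL1 (α g : ℝ) (Z : G) (v1 v2 W : F) : F := fun t x y z =>
  z ^ α * (Z t x y) ^ α *
    (pt v1 t x y z + v1 t x y z * px v1 t x y z + v2 t x y z * py v1 t x y z
      + W t x y z * pz v1 t x y z + g * qx Z t x y)
def momL2 (α g : ℝ) (Z : G) (v1 v2 W : F) : F := fun t x y z =>
  z ^ α * (Z t x y) ^ α *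
    (pt v2 t x y z + v1 t x y z * px v2 t x y z + v2 t x y z * py v2 t x y z
      + W t x y z * pz v2 t x y z + g * qy Z t x y)

/-- right-hand side (viscosity with momentum correction) of the momentum equations -/
def momR1 (μ lam : ℝ) (Z : G) (v1 v2 : F) : F := fun t x y z =>
  μ * (px (px v1) t x y z + py (py v1) t x y z)
    + (μ + lam) * px (divh v1 v2) t x y z
    + μ * pz (pz v1) t x y z
    + μ * (qx Z t x y / Z t x y * px v1 t x y z + qy Z t x y / Z t x y * py v1 t x y z)
    + (μ + lam) * divh v1 v2 t x y z * (qx Z t x y / Z t x y)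
def momR2 (μ lam : ℝ) (Z : G) (v1 v2 : F) : F := fun t x y z =>
  μ * (px (px v2) t x y z + py (py v2) t x y z)
    + (μ + lam) * py (divh v1 v2) t x y z
    + μ * pz (pz v2) t x y z
    + μ * (qx Z t x y / Z t x y * px v2 t x y z + qy Z t x y / Z t x y * py v2 t x y z)
    + (μ + lam) * divh v1 v2 t x y z * (qy Z t x y / Z t x y)

/-- right-hand side of the non-conservative momentum equations: Δ_h v + ∂_zz v -/
def momRNC1 (v1 : F) : F := fun t x y z =>
  px (px v1) t x y z + py (py v1) t x y z + pz (pz v1) t x y z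
def momRNC2 (v2 : F) : F := fun t x y z =>
  px (px v2) t x y z + py (py v2) t x y z + pz (pz v2) t x y z

/-- the evolution equation (ii) for the free interface Z -/
def massEq (α : ℝ) (Z : G) (v1 v2 : F) (t x y : ℝ) : Prop :=
  qt Z t x y
    + (α + 1) * (avg α v1 t x y * qx Z t x y + avg α v2 t x y * qy Z t x y)
    + avg α (divh v1 v2) t x y * Z t x y = 0

/-- the vertical-velocity identity (iii) -/
def WEq (α : ℝ) (Z : G) (v1 v2 W : F) (t x y z : ℝ) : Prop :=
  z ^ α * Z t x y * W t x y z =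
    z ^ (α + 1) * ((α + 1) * (avg α v1 t x y * qx Z t x y + avg α v2 t x y * qy Z t x y)
        + avg α (divh v1 v2) t x y * Z t x y)
      - (α + 1) * (cum α v1 t x y z * qx Z t x y + cum α v2 t x y z * qy Z t x y)
      - cum α (divh v1 v2) t x y z * Z t x y

/-- smoothness and 1-periodicity (in x and y) of the fields -/
structure SmoothFields (Z : G) (v1 v2 : F) : Prop where
  smooth_Z : ContDiff ℝ (⊤ : ℕ∞) fun p : ℝ × ℝ × ℝ => Z p.1 p.2.1 p.2.2
  smooth_v1 : ContDiff ℝ (⊤ : ℕ∞) fun p : ℝ × ℝ × ℝ × ℝ => v1 p.1 p.2.1 p.2.2.1 p.2.2.2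
  smooth_v2 : ContDiff ℝ (⊤ : ℕ∞) fun p : ℝ × ℝ × ℝ × ℝ => v2 p.1 p.2.1 p.2.2.1 p.2.2.2
  per_Z_x : ∀ t x y, Z t (x+1) y = Z t x y
  per_Z_y : ∀ t x y, Z t x (y+1) = Z t x y
  per_v1_x : ∀ t x y z, v1 t (x+1) y z = v1 t x y z
  per_v1_y : ∀ t x y z, v1 t x (y+1) z = v1 t x y z
  per_v2_x : ∀ t x y z, v2 t (x+1) y z = v2 t x y z
  per_v2_y : ∀ t x y z, v2 t x (y+1) z = v2 t x y z

/-- `(Z, v, W)` is a strong solution of (FB-CPE) for times in `S` -/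
structure IsSol (α g μ lam : ℝ) (S : Set ℝ) (Z : G) (v1 v2 W : F) : Prop where
  smooth : SmoothFields Z v1 v2
  smooth_W : ContDiff ℝ (⊤ : ℕ∞) fun p : ℝ × ℝ × ℝ × ℝ => W p.1 p.2.1 p.2.2.1 p.2.2.2
  per_W_x : ∀ t x y z, W t (x+1) y z = W t x y z
  per_W_y : ∀ t x y z, W t x (y+1) z = W t x y z
  Z_pos : ∀ t ∈ S, ∀ x y : ℝ, 0 < Z t x y
  mom1 : ∀ t ∈ S, ∀ x y : ℝ, ∀ z ∈ Icc (0:ℝ) 1,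
    momL1 α g Z v1 v2 W t x y z = momR1 μ lam Z v1 v2 t x y z
  mom2 : ∀ t ∈ S, ∀ x y : ℝ, ∀ z ∈ Icc (0:ℝ) 1,
    momL2 α g Z v1 v2 W t x y z = momR2 μ lam Z v1 v2 t x y z
  mass : ∀ t ∈ S, ∀ x y : ℝ, massEq α Z v1 v2 t x y
  weq : ∀ t ∈ S, ∀ x y : ℝ, ∀ z ∈ Icc (0:ℝ) 1, WEq α Z v1 v2 W t x y z
  bc_W0 : ∀ t ∈ S, ∀ x y : ℝ, W t x y 0 = 0
  bc_W1 : ∀ t ∈ S, ∀ x y : ℝ, W t x y 1 = 0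
  bc_v_z0 : ∀ t ∈ S, ∀ x y : ℝ, pz v1 t x y 0 = 0 ∧ pz v2 t x y 0 = 0
  bc_v_z1 : ∀ t ∈ S, ∀ x y : ℝ, pz v1 t x y 1 = 0 ∧ pz v2 t x y 1 = 0

/-- `(Z, v, W)` is a strong solution of the non-conservative system (NC) for times in `S` -/
structure IsSolNC (α g : ℝ) (S : Set ℝ) (Z : G) (v1 v2 W : F) : Prop where
  smooth : SmoothFields Z v1 v2
  smooth_W : ContDiff ℝ (⊤ : ℕ∞) fun p : ℝ × ℝ × ℝ × ℝ => W p.1 p.2.1 p.2.2.1 p.2.2.2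
  per_W_x : ∀ t x y z, W t (x+1) y z = W t x y z
  per_W_y : ∀ t x y z, W t x (y+1) z = W t x y z
  Z_pos : ∀ t ∈ S, ∀ x y : ℝ, 0 < Z t x y
  mom1 : ∀ t ∈ S, ∀ x y : ℝ, ∀ z ∈ Icc (0:ℝ) 1,
    momL1 α g Z v1 v2 W t x y z = momRNC1 v1 t x y z
  mom2 : ∀ t ∈ S, ∀ x y : ℝ, ∀ z ∈ Icc (0:ℝ) 1,
    momL2 α g Z v1 v2 W t x y z = momRNC2 v2 t x y z
  mass : ∀ t ∈ S, ∀ x y : ℝ, massEq α Z v1 v2 t x y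
  weq : ∀ t ∈ S, ∀ x y : ℝ, ∀ z ∈ Icc (0:ℝ) 1, WEq α Z v1 v2 W t x y z
  bc_W0 : ∀ t ∈ S, ∀ x y : ℝ, W t x y 0 = 0
  bc_W1 : ∀ t ∈ S, ∀ x y : ℝ, W t x y 1 = 0
  bc_v_z0 : ∀ t ∈ S, ∀ x y : ℝ, pz v1 t x y 0 = 0 ∧ pz v2 t x y 0 = 0
  bc_v_z1 : ∀ t ∈ S, ∀ x y : ℝ, pz v1 t x y 1 = 0 ∧ pz v2 t x y 1 = 0

/-- extend time-independent data to a bulk field -/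
def ext (f : ℝ → ℝ → ℝ → ℝ) : F := fun _ x y z => f x y z
/-- extend time-independent interface data -/
def extG (Z₀ : ℝ → ℝ → ℝ) : G := fun _ x y => Z₀ x y

/-- the vertical velocity recovered from (Z, v) by formula (iii) -/
def Wof (α : ℝ) (Z : G) (v1 v2 : F) : F := fun t x y z =>
  (z ^ (α + 1) * ((α + 1) * (avg α v1 t x y * qx Z t x y + avg α v2 t x y * qy Z t x y)
        + avg α (divh v1 v2) t x y * Z t x y)
      - (α + 1) * (cum α v1 t x y z * qx Z t x y + cum α v2 t x y z * qy Z t x y)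
      - cum α (divh v1 v2) t x y z * Z t x y) / (z ^ α * Z t x y)

/-- admissible initial data: regularity, periodicity, compatibility conditions,
normalized mass, and vanishing of `W₀` on the top and bottom boundaries -/
structure InitData (α : ℝ) (Z₀ : ℝ → ℝ → ℝ) (v₀1 v₀2 : ℝ → ℝ → ℝ → ℝ) : Prop where
  smooth : SmoothFields (extG Z₀) (ext v₀1) (ext v₀2)
  Z₀_pos : ∀ x y : ℝ, 0 < Z₀ x y
  bc_v_z0 : ∀ x y : ℝ, pz (ext v₀1) 0 x y 0 = 0 ∧ pz (ext v₀2) 0 x y 0 = 0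
  bc_v_z1 : ∀ x y : ℝ, pz (ext v₀1) 0 x y 1 = 0 ∧ pz (ext v₀2) 0 x y 1 = 0
  mass_one : I3 (fun x y _ => (Z₀ x y) ^ (α + 1)) = 1
  W₀_bc0 : ∀ x y : ℝ, Wof α (extG Z₀) (ext v₀1) (ext v₀2) 0 x y 0 = 0
  W₀_bc1 : ∀ x y : ℝ, Wof α (extG Z₀) (ext v₀1) (ext v₀2) 0 x y 1 = 0

/-- `v₁ = ∂_t v|_{t=0}` computed from the momentum equations and the data -/
def initVt1 (α g μ lam : ℝ) (Z₀ : ℝ → ℝ → ℝ) (v₀1 v₀2 : ℝ → ℝ → ℝ → ℝ) : F := fun t x y z =>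
  momR1 μ lam (extG Z₀) (ext v₀1) (ext v₀2) t x y z / (z ^ α * (Z₀ x y) ^ α)
    - (v₀1 x y z * px (ext v₀1) t x y z + v₀2 x y z * py (ext v₀1) t x y z
        + Wof α (extG Z₀) (ext v₀1) (ext v₀2) t x y z * pz (ext v₀1) t x y z
        + g * qx (extG Z₀) t x y)
def initVt2 (α g μ lam : ℝ) (Z₀ : ℝ → ℝ → ℝ) (v₀1 v₀2 : ℝ → ℝ → ℝ → ℝ) : F := fun t x y z =>
  momR2 μ lam (extG Z₀) (ext v₀1) (ext v₀2) t x y z / (z ^ α * (Z₀ x y) ^ α)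
    - (v₀1 x y z * px (ext v₀2) t x y z + v₀2 x y z * py (ext v₀2) t x y z
        + Wof α (extG Z₀) (ext v₀1) (ext v₀2) t x y z * pz (ext v₀2) t x y z
        + g * qy (extG Z₀) t x y)

/-- `Z₁ = ∂_t Z|_{t=0}` computed from the interface equation and the data -/
def initZt (α : ℝ) (Z₀ : ℝ → ℝ → ℝ) (v₀1 v₀2 : ℝ → ℝ → ℝ → ℝ) : G := fun t x y =>
  -((α + 1) * (avg α (ext v₀1) t x y * qx (extG Z₀) t x y
        + avg α (ext v₀2) t x y * qy (extG Z₀) t x y)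
      + avg α (divh (ext v₀1) (ext v₀2)) t x y * Z₀ x y)

/-- the total initial energy ℰ₀ computed from the data -/
def initEnergy (α g μ lam : ℝ) (Z₀ : ℝ → ℝ → ℝ) (v₀1 v₀2 : ℝ → ℝ → ℝ → ℝ) : ℝ :=
  VHhWSq α 2 (ext v₀1) (ext v₀2) 0
    + VL2WSq α (initVt1 α g μ lam Z₀ v₀1 v₀2) (initVt2 α g μ lam Z₀ v₀1 v₀2) 0
    + VHhWSq α 1 (pz (ext v₀1)) (pz (ext v₀2)) 0
    + VHSq 1 (ext v₀1) (ext v₀2) 0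
    + HSq2 2 (fun _ x y => Z₀ x y - 1) 0
    + L2Sq2 (initZt α Z₀ v₀1 v₀2) 0

/-- `v₁` for the non-conservative system -/
def initVtNC1 (α g : ℝ) (Z₀ : ℝ → ℝ → ℝ) (v₀1 v₀2 : ℝ → ℝ → ℝ → ℝ) : F := fun t x y z =>
  momRNC1 (ext v₀1) t x y z / (z ^ α * (Z₀ x y) ^ α)
    - (v₀1 x y z * px (ext v₀1) t x y z + v₀2 x y z * py (ext v₀1) t x y z
        + Wof α (extG Z₀) (ext v₀1) (ext v₀2) t x y z * pz (ext v₀1) t x y z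
        + g * qx (extG Z₀) t x y)
def initVtNC2 (α g : ℝ) (Z₀ : ℝ → ℝ → ℝ) (v₀1 v₀2 : ℝ → ℝ → ℝ → ℝ) : F := fun t x y z =>
  momRNC2 (ext v₀2) t x y z / (z ^ α * (Z₀ x y) ^ α)
    - (v₀1 x y z * px (ext v₀2) t x y z + v₀2 x y z * py (ext v₀2) t x y z
        + Wof α (extG Z₀) (ext v₀1) (ext v₀2) t x y z * pz (ext v₀2) t x y z
        + g * qy (extG Z₀) t x y)

/-- the total initial energy for the non-conservative system -/
def initEnergyNC (α g : ℝ) (Z₀ : ℝ → ℝ → ℝ) (v₀1 v₀2 : ℝ → ℝ → ℝ → ℝ) : ℝ :=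
  VHhWSq α 2 (ext v₀1) (ext v₀2) 0
    + VL2WSq α (initVtNC1 α g Z₀ v₀1 v₀2) (initVtNC2 α g Z₀ v₀1 v₀2) 0
    + VHhWSq α 1 (pz (ext v₀1)) (pz (ext v₀2)) 0
    + VHSq 1 (ext v₀1) (ext v₀2) 0
    + HSq2 2 (fun _ x y => Z₀ x y - 1) 0
    + L2Sq2 (initZt α Z₀ v₀1 v₀2) 0

/-- pointwise |∇_h v|² -/
def gradhPt (v1 v2 : F) (t x y z : ℝ) : ℝ :=
  (px v1 t x y z) ^ 2 + (py v1 t x y z) ^ 2 + (px v2 t x y z) ^ 2 + (py v2 t x y z) ^ 2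
/-- pointwise |∇ v|² -/
def gradPt (v1 v2 : F) (t x y z : ℝ) : ℝ :=
  gradhPt v1 v2 t x y z + (pz v1 t x y z) ^ 2 + (pz v2 t x y z) ^ 2
/-- pointwise |∇_h² f|² -/
def hesshPt (f : F) (t x y z : ℝ) : ℝ :=
  (hD 2 0 f t x y z) ^ 2 + 2 * (hD 1 1 f t x y z) ^ 2 + (hD 0 2 f t x y z) ^ 2
/-- pointwise |∇² f|² -/
def hessPt (f : F) (t x y z : ℝ) : ℝ :=
  (D3 2 0 0 f t x y z) ^ 2 + (D3 0 2 0 f t x y z) ^ 2 + (D3 0 0 2 f t x y z) ^ 2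
    + 2 * (D3 1 1 0 f t x y z) ^ 2 + 2 * (D3 1 0 1 f t x y z) ^ 2 + 2 * (D3 0 1 1 f t x y z) ^ 2
/-- pointwise |∇_h² Z|² -/
def hessh2Pt (Z : G) (t x y : ℝ) : ℝ :=
  (hD2 2 0 Z t x y) ^ 2 + 2 * (hD2 1 1 Z t x y) ^ 2 + (hD2 0 2 Z t x y) ^ 2

/-- the total relative energy 𝔈_c(t) -/
def frakE (α g μ lam c : ℝ) (Z : G) (v1 v2 : F) (t : ℝ) : ℝ :=
  (1/2) * I3 (fun x y z => z ^ α * (Z t x y) ^ (α+1) * ((v1 t x y z) ^ 2 + (v2 t x y z) ^ 2))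
    + (g/(α+2)) * I3 (fun x y _ =>
        ((Z t x y) ^ (α+2) - 1) - ((α+2)/(α+1)) * ((Z t x y) ^ (α+1) - 1))
    + c * I3 (fun x y z =>
        (μ/2) * gradhPt v1 v2 t x y z + ((μ+lam)/2) * (divh v1 v2 t x y z) ^ 2
          + (μ/2) * ((pz v1 t x y z) ^ 2 + (pz v2 t x y z) ^ 2)
          - (g/(α+1)) * z ^ α * ((Z t x y) ^ (α+1) - 1) * divh v1 v2 t x y z)
    + (1/2) * I3 (fun x y z => z ^ α * (Z t x y) ^ (α+1) *
        ((pt v1 t x y z) ^ 2 + (pt v2 t x y z) ^ 2 + gradhPt v1 v2 t x y z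
          + hesshPt v1 t x y z + hesshPt v2 t x y z
          + (pz v1 t x y z) ^ 2 + (pz v2 t x y z) ^ 2
          + gradhPt (pz v1) (pz v2) t x y z))
    + (g/2) * I3 (fun x y _ =>
        (Z t x y) ^ α * (qt Z t x y) ^ 2
          + (Z t x y) ^ α * ((qx Z t x y) ^ 2 + (qy Z t x y) ^ 2)
          + hessh2Pt Z t x y)

/-- the relative dissipation functional 𝔇(t) -/
def frakD (α μ : ℝ) (Z : G) (v1 v2 : F) (t : ℝ) : ℝ :=
  (μ/2) * I3 (fun x y z => Z t x y *
      (gradPt v1 v2 t x y z + gradPt (pt v1) (pt v2) t x y z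
        + hessPt v1 t x y z + hessPt v2 t x y z
        + hessPt (px v1) t x y z + hessPt (py v1) t x y z
        + hessPt (px v2) t x y z + hessPt (py v2) t x y z))
    + I3 (fun x y z => z ^ α * (Z t x y) ^ α * ((pt v1 t x y z) ^ 2 + (pt v2 t x y z) ^ 2))
    + I3 (fun x y _ => (qt Z t x y) ^ 2 + (qx Z t x y) ^ 2 + (qy Z t x y) ^ 2
        + hessh2Pt Z t x y)

/-- ‖z^{w/2} ∇_h³ f‖²_{L²} -/
def h3WSq (w : ℝ) (f : F) (t : ℝ) : ℝ :=
  L2WSq w (hD 3 0 f) t + L2WSq w (hD 2 1 f) t + L2WSq w (hD 1 2 f) t + L2WSq w (hD 0 3 f) t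
def Vh3WSq (w : ℝ) (v1 v2 : F) (t : ℝ) : ℝ := h3WSq w v1 t + h3WSq w v2 t
/-- ‖∇_h³ Z‖²_{L²} -/
def h3Sq2 (Z : G) (t : ℝ) : ℝ :=
  L2Sq2 (hD2 3 0 Z) t + L2Sq2 (hD2 2 1 Z) t + L2Sq2 (hD2 1 2 Z) t + L2Sq2 (hD2 0 3 Z) t
/-- ‖∇ ∇_h³ f‖²_{L²} -/
def gradh3Sq (f : F) (t : ℝ) : ℝ :=
  (L2Sq (px (hD 3 0 f)) t + L2Sq (py (hD 3 0 f)) t + L2Sq (pz (hD 3 0 f)) t)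
    + (L2Sq (px (hD 2 1 f)) t + L2Sq (py (hD 2 1 f)) t + L2Sq (pz (hD 2 1 f)) t)
    + (L2Sq (px (hD 1 2 f)) t + L2Sq (py (hD 1 2 f)) t + L2Sq (pz (hD 1 2 f)) t)
    + (L2Sq (px (hD 0 3 f)) t + L2Sq (py (hD 0 3 f)) t + L2Sq (pz (hD 0 3 f)) t)
def Vgradh3Sq (v1 v2 : F) (t : ℝ) : ℝ := gradh3Sq v1 t + gradh3Sq v2 t

/-- squared L^∞-norm of an interface field -/
def LinfSq2 (Z : G) (t : ℝ) : ℝ := ⨆ x : ℝ, ⨆ y : ℝ, (Z t x y) ^ 2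
/-- squared L^∞-norm of ∇_h Z -/
def gradhLinfSq2 (Z : G) (t : ℝ) : ℝ :=
  ⨆ x : ℝ, ⨆ y : ℝ, ((qx Z t x y) ^ 2 + (qy Z t x y) ^ 2)

/-- the mean momentum δ(t) (one component) for the non-conservative system -/
def delta (α : ℝ) (Z : G) (v : F) (t : ℝ) : ℝ :=
  (α + 1) * I3 (fun x y z => z ^ α * (Z t x y) ^ (α+1) * v t x y z)
/-- the shifted velocity v − δ(t) -/
def vShift (α : ℝ) (Z : G) (v : F) : F := fun t x y z => v t x y z - delta α Z v t

/-- the non-conservative energy ℰ_n(t) -/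
def calEn (α : ℝ) (Z : G) (v1 v2 : F) (t : ℝ) : ℝ :=
  calE α Z (vShift α Z v1) (vShift α Z v2) t


lemma amgm {l : ℝ} (hl : 0 < l) (x y : ℝ) : -(2*(x*y)) ≤ l*x^2 + l⁻¹*y^2 := by
  have h1 : l * l⁻¹ = 1 := mul_inv_cancel₀ hl.ne'
  nlinarith [sq_nonneg (l*x + y), sq_nonneg y, hl]

lemma amgm2 {l u v w : ℝ} (hl : 0 < l) (hu : 0 ≤ u) (hv : 0 ≤ v) (hw : w^2 = u*v) :
    w ≤ (l*u + l⁻¹*v)/2 := by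
  have hx := Real.sq_sqrt hu
  have hy := Real.sq_sqrt hv
  have h1 : w ≤ Real.sqrt u * Real.sqrt v := by
    calc w ≤ |w| := le_abs_self w
      _ = Real.sqrt (w^2) := (Real.sqrt_sq_eq_abs w).symm
      _ = _ := by rw [hw, Real.sqrt_mul hu]
  have h2 := amgm hl (Real.sqrt u) (-(Real.sqrt v))
  simp only [neg_sq, mul_neg, neg_neg] at h2
  rw [hx, hy] at h2
  linarith

lemma sq_le_of_forall_amgm {d a B : ℝ} (hd : 0 ≤ d) (ha : 0 < a) (hB : 0 ≤ B)
    (h : ∀ l : ℝ, 0 < l → d ≤ (l*a + l⁻¹*B)/2) : d^2 ≤ a*B := by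
  rcases hB.eq_or_lt with h0 | hBpos
  · have hd0 : d ≤ 0 := by
      by_contra hc
      push_neg at hc
      have := h (d/a) (by positivity)
      rw [← h0] at this
      have he : (d/a)*a = d := div_mul_cancel₀ d ha.ne'
      rw [he] at this
      simp at this
      linarith
    have : d = 0 := le_antisymm hd0 hd
    rw [this, ← h0]
    simp
  · have hl := h (Real.sqrt (B/a)) (Real.sqrt_pos.mpr (by positivity))
    have hsa := Real.sqrt_pos.mpr ha
    have hsB := Real.sqrt_pos.mpr hBpos
    have e0 : Real.sqrt (B/a) = Real.sqrt B / Real.sqrt a := Real.sqrt_div hBpos.le a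
    have e1 : Real.sqrt (B/a) * a = Real.sqrt a * Real.sqrt B := by
      rw [e0]
      field_simp
      nlinarith [Real.sq_sqrt ha.le, Real.sq_sqrt hBpos.le]
    have e2 : (Real.sqrt (B/a))⁻¹ * B = Real.sqrt a * Real.sqrt B := by
      rw [e0, inv_div]
      field_simp
      nlinarith [Real.sq_sqrt ha.le, Real.sq_sqrt hBpos.le]
    rw [e1, e2] at hl
    have hl' : d ≤ Real.sqrt a * Real.sqrt B := by linarith
    calc d^2 ≤ (Real.sqrt a * Real.sqrt B)^2 := by nlinarith [mul_nonneg hsa.le hsB.le]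
      _ = a*B := by rw [mul_pow, Real.sq_sqrt ha.le, Real.sq_sqrt hB]

lemma integrableOn_of_le_of_contOn {T : Set ℝ} (hT : MeasurableSet T) {f h : ℝ → ℝ}
    (hfi : IntegrableOn h T) (hc : ContinuousOn f T) (hb : ∀ s ∈ T, |f s| ≤ h s) :
    IntegrableOn f T := by
  refine Integrable.mono hfi (hc.aestronglyMeasurable hT) ?_
  rw [ae_restrict_iff' hT]
  refine Eventually.of_forall fun s hs => ?_
  have := hb s hs
  simp only [Real.norm_eq_abs]
  exact this.trans (le_abs_self _)

lemma rpow_sq {s : ℝ} (hs : 0 < s) (p : ℝ) : (s^p)^2 = s^(2*p) := by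
  rw [sq, ← Real.rpow_add hs]
  ring_nf

lemma bdry {ω : ℝ} (hω : 0 < ω) {g g' : ℝ → ℝ}
    (hg : ∀ s ∈ Icc (ω/2) ω, HasDerivAt g (g' s) s)
    (hg' : ContinuousOn g' (Icc (ω/2) ω)) :
    (g ω)^2 ≤ (3/ω) * (∫ s in (ω/2)..ω, (g s)^2) + ω * ∫ s in (ω/2)..ω, (g' s)^2 := by
  have hhalf : ω/2 ≤ ω := by linarith
  have hIcc : uIcc (ω/2) ω = Icc (ω/2) ω := uIcc_of_le hhalf
  have hgc : ContinuousOn g (Icc (ω/2) ω) := fun s hs =>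
    ((hg s hs).continuousAt).continuousWithinAt
  have hg2i : IntervalIntegrable (fun s => (g s)^2) volume (ω/2) ω := by
    apply ContinuousOn.intervalIntegrable; rw [hIcc]; exact hgc.pow 2
  have hg'2i : IntervalIntegrable (fun s => (g' s)^2) volume (ω/2) ω := by
    apply ContinuousOn.intervalIntegrable; rw [hIcc]; exact hg'.pow 2
  -- min point
  obtain ⟨s₀, hs₀, hmin⟩ := isCompact_Icc.exists_isMinOn (nonempty_Icc.mpr hhalf) (hgc.pow 2)
  have hsub : Icc s₀ ω ⊆ Icc (ω/2) ω := Icc_subset_Icc hs₀.1 le_rfl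
  have hIcc' : uIcc s₀ ω = Icc s₀ ω := uIcc_of_le hs₀.2
  -- min ≤ average
  have hminint : (g s₀)^2 * (ω/2) ≤ ∫ s in (ω/2)..ω, (g s)^2 := by
    have h1 : ∫ s in (ω/2)..ω, (g s₀)^2 ≤ ∫ s in (ω/2)..ω, (g s)^2 :=
      intervalIntegral.integral_mono_on hhalf intervalIntegrable_const hg2i
        (fun s hs => hmin hs)
    rw [intervalIntegral.integral_const, smul_eq_mul] at h1
    calc (g s₀)^2 * (ω/2) = (ω - ω/2) * (g s₀)^2 := by ring
      _ ≤ _ := h1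
  -- FTC on [s₀, ω]
  have hftc : ∫ s in s₀..ω, 2*(g s)*(g' s) = (g ω)^2 - (g s₀)^2 := by
    apply intervalIntegral.integral_eq_sub_of_hasDerivAt
    · intro s hs
      rw [hIcc'] at hs
      have h := (hg s (hsub hs)).pow 2
      refine h.congr_deriv ?_
      push_cast; ring
    · apply ContinuousOn.intervalIntegrable; rw [hIcc']
      exact (continuousOn_const.mul (hgc.mono hsub)).mul (hg'.mono hsub)
  -- pointwise AM-GM and comparison
  have hcmp : ∫ s in s₀..ω, 2*(g s)*(g' s)
      ≤ ∫ s in s₀..ω, ((g s)^2/ω + ω*(g' s)^2) := by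
    apply intervalIntegral.integral_mono_on hs₀.2
    · apply ContinuousOn.intervalIntegrable; rw [hIcc']
      exact (continuousOn_const.mul (hgc.mono hsub)).mul (hg'.mono hsub)
    · apply ContinuousOn.intervalIntegrable; rw [hIcc']
      exact (((hgc.mono hsub).pow 2).div_const ω).add
        (continuousOn_const.mul ((hg'.mono hsub).pow 2))
    · intro s _
      rw [div_add' _ _ _ hω.ne', le_div_iff₀ hω]
      nlinarith [sq_nonneg (g s - ω * g' s)]
  -- extend to [ω/2, ω]
  have hsplit : ∫ s in (ω/2)..ω, ((g s)^2/ω + ω*(g' s)^2)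
      = (∫ s in (ω/2)..s₀, ((g s)^2/ω + ω*(g' s)^2))
        + ∫ s in s₀..ω, ((g s)^2/ω + ω*(g' s)^2) := by
    rw [intervalIntegral.integral_add_adjacent_intervals] <;>
    · apply ContinuousOn.intervalIntegrable
      apply ContinuousOn.mono ((hgc.pow 2 |>.div_const ω).add (continuousOn_const.mul (hg'.pow 2)))
      rw [uIcc_of_le]
      · first
        | exact Icc_subset_Icc le_rfl hs₀.2
        | exact hsub
      · first | exact hs₀.1 | exact hs₀.2
  have hfirst : 0 ≤ ∫ s in (ω/2)..s₀, ((g s)^2/ω + ω*(g' s)^2) := by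
    apply intervalIntegral.integral_nonneg hs₀.1
    intro s _
    positivity
  have hext : ∫ s in s₀..ω, ((g s)^2/ω + ω*(g' s)^2)
      ≤ ∫ s in (ω/2)..ω, ((g s)^2/ω + ω*(g' s)^2) := by
    rw [hsplit]; linarith
  have hsplit2 : ∫ s in (ω/2)..ω, ((g s)^2/ω + ω*(g' s)^2)
      = (1/ω) * (∫ s in (ω/2)..ω, (g s)^2) + ω * ∫ s in (ω/2)..ω, (g' s)^2 := by
    rw [intervalIntegral.integral_add (hg2i.div_const ω) (hg'2i.const_mul ω),
      intervalIntegral.integral_div, intervalIntegral.integral_const_mul]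
    ring
  have hgs0 : (g s₀)^2 ≤ (2/ω) * ∫ s in (ω/2)..ω, (g s)^2 := by
    have h2 : (g s₀)^2 = (2/ω)*((g s₀)^2*(ω/2)) := by field_simp
    rw [h2]
    exact mul_le_mul_of_nonneg_left hminint (by positivity)
  have h3 : (3/ω) * (∫ s in (ω/2)..ω, (g s)^2)
      = (2/ω) * (∫ s in (ω/2)..ω, (g s)^2) + (1/ω) * (∫ s in (ω/2)..ω, (g s)^2) := by ring
  linarith

lemma integral_Ioc_le_of_forall {b M : ℝ} (hb : 0 < b) {f : ℝ → ℝ}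
    (hfi : IntegrableOn f (Ioc 0 b)) (h : ∀ ε, 0 < ε → ε < b → ∫ s in Ioc ε b, f s ≤ M) :
    ∫ s in Ioc 0 b, f s ≤ M := by
  have hs : ∀ n : ℕ, MeasurableSet (Ioc (b/(n+2):ℝ) b) := fun n => measurableSet_Ioc
  have hmono : Monotone (fun n : ℕ => Ioc (b/(n+2):ℝ) b) := by
    intro n m hnm
    apply Ioc_subset_Ioc_left
    apply div_le_div_of_nonneg_left hb.le (by positivity)
    have : (n:ℝ) ≤ m := Nat.cast_le.mpr hnm
    linarith
  have hU : (⋃ n : ℕ, Ioc (b/(n+2):ℝ) b) = Ioc 0 b := by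
    ext x
    simp only [mem_iUnion, mem_Ioc]
    constructor
    · rintro ⟨n, h1, h2⟩
      have : (0:ℝ) < b/(n+2) := by positivity
      exact ⟨this.trans h1, h2⟩
    · rintro ⟨hx0, hxb⟩
      obtain ⟨n, hn⟩ := exists_nat_gt (b/x)
      refine ⟨n, ?_, hxb⟩
      rw [div_lt_iff₀ (by positivity)]
      have : b/x < (n:ℝ)+2 := by linarith
      calc b = (b/x)*x := by field_simp
        _ < ((n:ℝ)+2)*x := by exact mul_lt_mul_of_pos_right this hx0
        _ = x*((n:ℝ)+2) := by ring
  have ht := tendsto_setIntegral_of_monotone hs hmono (hU ▸ hfi)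
  rw [hU] at ht
  refine le_of_tendsto ht (Eventually.of_forall fun n => ?_)
  refine h _ (by positivity) (div_lt_self hb ?_)
  have : (0:ℝ) ≤ n := Nat.cast_nonneg n
  linarith

lemma ibp {g g' : ℝ → ℝ} {a b k c : ℝ} (ha : 0 < a) (hab : a ≤ b)
    (hg : ∀ s ∈ Icc a b, HasDerivAt g (g' s) s) (hg' : ContinuousOn g' (Icc a b)) :
    ∫ s in a..b, ((k-1) * (s^(k-2) * (g s - c)^2) + s^(k-1) * (2*(g s - c) * g' s))
      = b^(k-1)*(g b - c)^2 - a^(k-1)*(g a - c)^2 := by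
  have hIcc : uIcc a b = Icc a b := uIcc_of_le hab
  have hgc : ContinuousOn g (Icc a b) := fun s hs => ((hg s hs).continuousAt).continuousWithinAt
  have hr : ∀ (p : ℝ), ContinuousOn (fun s : ℝ => s ^ p) (Icc a b) := fun p =>
    ContinuousOn.rpow_const continuousOn_id (fun s hs => Or.inl (lt_of_lt_of_le ha hs.1).ne')
  have hcont : ContinuousOn
      (fun s => (k-1) * (s^(k-2) * (g s - c)^2) + s^(k-1) * (2*(g s - c) * g' s)) (Icc a b) := by
    exact (continuousOn_const.mul ((hr _).mul ((hgc.sub continuousOn_const).pow 2))).add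
      ((hr _).mul ((continuousOn_const.mul (hgc.sub continuousOn_const)).mul hg'))
  have hder : ∀ s ∈ uIcc a b, HasDerivAt (fun s => s^(k-1)*(g s - c)^2)
      ((k-1) * (s^(k-2) * (g s - c)^2) + s^(k-1) * (2*(g s - c) * g' s)) s := by
    intro s hs
    rw [hIcc] at hs
    have hs0 : s ≠ 0 := (lt_of_lt_of_le ha hs.1).ne'
    have h1 : HasDerivAt (fun s : ℝ => s^(k-1)) ((k-1) * s^(k-2)) s := by
      have h := Real.hasDerivAt_rpow_const (x := s) (p := k-1) (Or.inl hs0)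
      have : k - 1 - 1 = k - 2 := by ring
      rwa [this] at h
    have h2 : HasDerivAt (fun s => (g s - c)^2) (2*(g s - c) * g' s) s := by
      have h := ((hg s hs).sub_const c).pow 2
      refine h.congr_deriv ?_
      push_cast
      ring
    have := h1.mul h2
    refine this.congr_deriv ?_
    ring
  exact intervalIntegral.integral_eq_sub_of_hasDerivAt hder
    ((hIcc ▸ hcont).intervalIntegrable)

lemma bdry_weighted {k m ω : ℝ} (hk : 0 < k) (hω : 0 < ω) {g g' : ℝ → ℝ}
    (hg : ∀ s ∈ Icc (ω/2) ω, HasDerivAt g (g' s) s)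
    (hg' : ContinuousOn g' (Icc (ω/2) ω))
    (hGi : IntegrableOn (fun s => s^k*(g s)^2) (Ioc (0:ℝ) ω))
    (hBi : IntegrableOn (fun s => s^m*(g' s)^2) (Ioc (0:ℝ) ω)) :
    ω^(k-1) * (g ω)^2 ≤ 3*2^k/ω^2 * (∫ s in Ioc (0:ℝ) ω, s^k*(g s)^2)
      + 2^|m| * ω^(k-m) * ∫ s in Ioc (0:ℝ) ω, s^m*(g' s)^2 := by
  have hhalf : ω/2 ≤ ω := by linarith
  have hIcc : uIcc (ω/2) ω = Icc (ω/2) ω := uIcc_of_le hhalf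
  have hgc : ContinuousOn g (Icc (ω/2) ω) := fun s hs =>
    ((hg s hs).continuousAt).continuousWithinAt
  have hrp : ∀ p : ℝ, ContinuousOn (fun s : ℝ => s^p) (Icc (ω/2) ω) := fun p =>
    continuousOn_id.rpow_const (fun s hs => Or.inl (lt_of_lt_of_le (by linarith) hs.1).ne')
  have hb := bdry hω hg hg'
  have hnn : ∀ s ∈ Ioc (0:ℝ) ω, 0 ≤ s^k*(g s)^2 := fun s hs =>
    mul_nonneg (Real.rpow_nonneg hs.1.le _) (sq_nonneg _)
  have hnn' : ∀ s ∈ Ioc (0:ℝ) ω, 0 ≤ s^m*(g' s)^2 := fun s hs =>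
    mul_nonneg (Real.rpow_nonneg hs.1.le _) (sq_nonneg _)
  have hsubset : Ioc (ω/2) ω ⊆ Ioc (0:ℝ) ω := Ioc_subset_Ioc_left (by linarith)
  -- weight transfer for g²
  have hw1 : ∫ s in (ω/2)..ω, (g s)^2 ≤ (2/ω)^k * ∫ s in Ioc (0:ℝ) ω, s^k*(g s)^2 := by
    have step1 : ∫ s in (ω/2)..ω, (g s)^2 ≤ ∫ s in (ω/2)..ω, (2/ω)^k * (s^k*(g s)^2) := by
      apply intervalIntegral.integral_mono_on hhalf
      · apply ContinuousOn.intervalIntegrable; rw [hIcc]; exact hgc.pow 2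
      · apply ContinuousOn.intervalIntegrable; rw [hIcc]
        exact continuousOn_const.mul ((hrp k).mul (hgc.pow 2))
      · intro s hs
        have hspos : 0 < s := lt_of_lt_of_le (by linarith) hs.1
        have h1 : (1:ℝ) ≤ (2/ω)^k * s^k := by
          rw [← Real.mul_rpow (by positivity) hspos.le]
          calc (1:ℝ) = 1^k := (Real.one_rpow k).symm
            _ ≤ (2/ω*s)^k := Real.rpow_le_rpow zero_le_one
                (by rw [div_mul_eq_mul_div, le_div_iff₀ hω]; linarith [hs.1]) hk.le
        calc (g s)^2 = 1*(g s)^2 := (one_mul _).symm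
          _ ≤ ((2/ω)^k * s^k)*(g s)^2 := mul_le_mul_of_nonneg_right h1 (sq_nonneg _)
          _ = (2/ω)^k * (s^k*(g s)^2) := by ring
    have step2 : ∫ s in (ω/2)..ω, (2/ω)^k * (s^k*(g s)^2)
        = (2/ω)^k * ∫ s in Ioc (ω/2) ω, s^k*(g s)^2 := by
      rw [intervalIntegral.integral_const_mul, intervalIntegral.integral_of_le hhalf]
    have step3 : ∫ s in Ioc (ω/2) ω, s^k*(g s)^2 ≤ ∫ s in Ioc (0:ℝ) ω, s^k*(g s)^2 :=
      setIntegral_mono_set hGi ((ae_restrict_iff' measurableSet_Ioc).2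
        (Eventually.of_forall hnn)) hsubset.eventuallyLE
    calc ∫ s in (ω/2)..ω, (g s)^2 ≤ _ := step1
      _ = _ := step2
      _ ≤ (2/ω)^k * ∫ s in Ioc (0:ℝ) ω, s^k*(g s)^2 :=
        mul_le_mul_of_nonneg_left step3 (by positivity)
  -- weight transfer for g'²
  have hw2 : ∫ s in (ω/2)..ω, (g' s)^2 ≤ 2^|m| * ω^(-m) * ∫ s in Ioc (0:ℝ) ω, s^m*(g' s)^2 := by
    have step1 : ∫ s in (ω/2)..ω, (g' s)^2 ≤ ∫ s in (ω/2)..ω, 2^|m| * ω^(-m) * (s^m*(g' s)^2) := by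
      apply intervalIntegral.integral_mono_on hhalf
      · apply ContinuousOn.intervalIntegrable; rw [hIcc]; exact hg'.pow 2
      · apply ContinuousOn.intervalIntegrable; rw [hIcc]
        exact continuousOn_const.mul ((hrp m).mul (hg'.pow 2))
      · intro s hs
        have hspos : 0 < s := lt_of_lt_of_le (by linarith) hs.1
        have h1 : (1:ℝ) ≤ 2^|m| * ω^(-m) * s^m := by
          have hωm : (0:ℝ) < ω^m := Real.rpow_pos_of_pos hω m
          rcases le_or_gt 0 m with hm | hm
          · rw [abs_of_nonneg hm]
            have h2 : (ω/2)^m ≤ s^m := Real.rpow_le_rpow (by positivity) hs.1 hm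
            have h3 : (ω/2)^m = ω^m/2^m := Real.div_rpow hω.le (by norm_num) m
            have h4 : (0:ℝ) < 2^m := Real.rpow_pos_of_pos two_pos m
            rw [Real.rpow_neg hω.le]
            rw [h3] at h2
            calc (1:ℝ) = 2^m * (ω^m)⁻¹ * (ω^m/2^m) := by field_simp
              _ ≤ 2^m * (ω^m)⁻¹ * s^m := by
                  apply mul_le_mul_of_nonneg_left h2 (by positivity)
          · rw [abs_of_neg hm]
            have h2 : ω^m ≤ s^m := Real.rpow_le_rpow_of_nonpos hspos hs.2 hm.le
            have h5 : (1:ℝ) ≤ 2^(-m) := by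
              calc (1:ℝ) = 2^(0:ℝ) := (Real.rpow_zero 2).symm
                _ ≤ 2^(-m) := Real.rpow_le_rpow_of_exponent_le one_le_two (by linarith)
            rw [Real.rpow_neg hω.le]
            calc (1:ℝ) = 1 * ((ω^m)⁻¹ * ω^m) := by field_simp
              _ ≤ 2^(-m) * ((ω^m)⁻¹ * s^m) := by
                  have := mul_le_mul_of_nonneg_left h2 (inv_nonneg.mpr hωm.le)
                  have h6 : 0 ≤ (ω^m)⁻¹ * ω^m := by positivity
                  nlinarith [this, h5, h6]
              _ = 2^(-m) * (ω^m)⁻¹ * s^m := by ring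
        calc (g' s)^2 = 1*(g' s)^2 := (one_mul _).symm
          _ ≤ (2^|m| * ω^(-m) * s^m)*(g' s)^2 := mul_le_mul_of_nonneg_right h1 (sq_nonneg _)
          _ = 2^|m| * ω^(-m) * (s^m*(g' s)^2) := by ring
    have step2 : ∫ s in (ω/2)..ω, 2^|m| * ω^(-m) * (s^m*(g' s)^2)
        = 2^|m| * ω^(-m) * ∫ s in Ioc (ω/2) ω, s^m*(g' s)^2 := by
      rw [intervalIntegral.integral_const_mul, intervalIntegral.integral_of_le hhalf]
    have step3 : ∫ s in Ioc (ω/2) ω, s^m*(g' s)^2 ≤ ∫ s in Ioc (0:ℝ) ω, s^m*(g' s)^2 :=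
      setIntegral_mono_set hBi ((ae_restrict_iff' measurableSet_Ioc).2
        (Eventually.of_forall hnn')) hsubset.eventuallyLE
    have hc : (0:ℝ) ≤ 2^|m| * ω^(-m) := by positivity
    calc ∫ s in (ω/2)..ω, (g' s)^2 ≤ _ := step1
      _ = _ := step2
      _ ≤ _ := mul_le_mul_of_nonneg_left step3 hc
  -- combine
  set G := ∫ s in Ioc (0:ℝ) ω, s^k*(g s)^2
  set Bm := ∫ s in Ioc (0:ℝ) ω, s^m*(g' s)^2
  have hωk : (0:ℝ) < ω^k := Real.rpow_pos_of_pos hω k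
  have hωm : (0:ℝ) < ω^m := Real.rpow_pos_of_pos hω m
  have hωk1 : ω^(k-1) = ω^k/ω := by rw [Real.rpow_sub hω, Real.rpow_one]
  have e1 : ω^(k-1)*(3/ω)*((2/ω)^k) = 3*2^k/ω^2 := by
    rw [hωk1, Real.div_rpow (by norm_num) hω.le]
    field_simp
  have e2 : ω^(k-1)*ω*(2^|m| * ω^(-m)) = 2^|m| * ω^(k-m) := by
    rw [hωk1, Real.rpow_neg hω.le, Real.rpow_sub hω]
    field_simp
  have hω1 : (0:ℝ) ≤ ω^(k-1) := Real.rpow_nonneg hω.le _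
  calc ω^(k-1) * (g ω)^2
      ≤ ω^(k-1) * ((3/ω) * (∫ s in (ω/2)..ω, (g s)^2) + ω * ∫ s in (ω/2)..ω, (g' s)^2) :=
        mul_le_mul_of_nonneg_left hb hω1
    _ = (ω^(k-1)*(3/ω)) * (∫ s in (ω/2)..ω, (g s)^2)
        + (ω^(k-1)*ω) * ∫ s in (ω/2)..ω, (g' s)^2 := by ring
    _ ≤ (ω^(k-1)*(3/ω)) * ((2/ω)^k * G) + (ω^(k-1)*ω) * (2^|m| * ω^(-m) * Bm) := by
        apply add_le_add
        · exact mul_le_mul_of_nonneg_left hw1 (by positivity)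
        · exact mul_le_mul_of_nonneg_left hw2 (by positivity)
    _ = (ω^(k-1)*(3/ω)*((2/ω)^k)) * G + (ω^(k-1)*ω*(2^|m| * ω^(-m))) * Bm := by ring
    _ = 3*2^k/ω^2 * G + 2^|m| * ω^(k-m) * Bm := by rw [e1, e2]

lemma partA {k L : ℝ} (hk : 1 < k) (hL : 0 < L) {g g' : ℝ → ℝ}
    (hg : ∀ s ∈ Ioc (0:ℝ) L, HasDerivAt g (g' s) s)
    (hg' : ContinuousOn g' (Ioc (0:ℝ) L))
    (hfi : IntegrableOn (fun s => s ^ k * ((g s) ^ 2 / L ^ 2 + (g' s) ^ 2)) (Ioc (0:ℝ) L)) :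
    (∫ s in Ioc (0:ℝ) L, s ^ (k-2) * (g s) ^ 2)
      ≤ ((2/(k-1)) * (4*2^k + 2/(k-1))) *
        ∫ s in Ioc (0:ℝ) L, s ^ k * ((g s) ^ 2 / L ^ 2 + (g' s) ^ 2) := by
  have hk1 : (0:ℝ) < k - 1 := by linarith
  have h2k : (0:ℝ) < 2^k := Real.rpow_pos_of_pos two_pos k
  set R := ∫ s in Ioc (0:ℝ) L, s ^ k * ((g s)^2 / L^2 + (g' s)^2) with hRdef
  have hgc : ContinuousOn g (Ioc (0:ℝ) L) := fun s hs =>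
    ((hg s hs).continuousAt).continuousWithinAt
  have hrp : ∀ p : ℝ, ContinuousOn (fun s : ℝ => s ^ p) (Ioc (0:ℝ) L) := fun p =>
    continuousOn_id.rpow_const (fun s hs => Or.inl hs.1.ne')
  have hGi : IntegrableOn (fun s => s^k * (g s)^2) (Ioc (0:ℝ) L) := by
    apply integrableOn_of_le_of_contOn (f := fun s => s^k * (g s)^2) measurableSet_Ioc (hfi.const_mul (L^2))
      ((hrp k).mul (hgc.pow 2))
    intro s hs
    have h0 : (0:ℝ) ≤ s^k := Real.rpow_nonneg hs.1.le k
    rw [abs_of_nonneg (by positivity)]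
    have e : L^2*(s^k*((g s)^2/L^2 + (g' s)^2)) = s^k*(g s)^2 + L^2*(s^k*(g' s)^2) := by
      field_simp
    rw [e]
    nlinarith [mul_nonneg h0 (sq_nonneg (g' s)), sq_nonneg L]
  have hBi : IntegrableOn (fun s => s^k * (g' s)^2) (Ioc (0:ℝ) L) := by
    apply integrableOn_of_le_of_contOn (f := fun s => s^k * (g' s)^2) measurableSet_Ioc hfi ((hrp k).mul (hg'.pow 2))
    intro s hs
    have h0 : (0:ℝ) ≤ s^k := Real.rpow_nonneg hs.1.le k
    rw [abs_of_nonneg (by positivity)]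
    have : s^k*((g s)^2/L^2 + (g' s)^2) = s^k*((g s)^2/L^2) + s^k*(g' s)^2 := by ring
    rw [this]
    nlinarith [mul_nonneg h0 (div_nonneg (sq_nonneg (g s)) (sq_nonneg L))]
  set G := ∫ s in Ioc (0:ℝ) L, s^k*(g s)^2 with hGdef
  set B := ∫ s in Ioc (0:ℝ) L, s^k*(g' s)^2 with hBdef
  have hG0 : 0 ≤ G := setIntegral_nonneg measurableSet_Ioc (fun s hs =>
    mul_nonneg (Real.rpow_nonneg hs.1.le _) (sq_nonneg _))
  have hB0 : 0 ≤ B := setIntegral_nonneg measurableSet_Ioc (fun s hs =>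
    mul_nonneg (Real.rpow_nonneg hs.1.le _) (sq_nonneg _))
  have hRsplit : R = G/L^2 + B := by
    rw [hRdef, hGdef, hBdef]
    have e : ∀ s : ℝ, s^k*((g s)^2/L^2 + (g' s)^2) = (s^k*(g s)^2)/L^2 + s^k*(g' s)^2 :=
      fun s => by ring
    simp_rw [e]
    rw [integral_add (hGi.div_const (L^2)) hBi, MeasureTheory.integral_div]
  have hGL0 : 0 ≤ G/L^2 := div_nonneg hG0 (sq_nonneg L)
  have hR0 : 0 ≤ R := by rw [hRsplit]; linarith
  have hBR : B ≤ R := by rw [hRsplit]; linarith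
  -- boundary
  have hsubL : Icc (L/2) L ⊆ Ioc (0:ℝ) L := fun s hs => ⟨lt_of_lt_of_le (by linarith) hs.1, hs.2⟩
  have hbd := bdry_weighted (k := k) (m := k) (by linarith) hL
    (fun s hs => hg s (hsubL hs)) (hg'.mono hsubL) hGi hBi
  rw [sub_self, Real.rpow_zero, abs_of_pos (by linarith : (0:ℝ) < k)] at hbd
  have hbd' : L^(k-1)*(g L)^2 ≤ 4*2^k*R := by
    have e : 3*2^k/L^2*G = 3*2^k*(G/L^2) := by ring
    rw [e, mul_one] at hbd
    nlinarith [mul_nonneg h2k.le hGL0, mul_nonneg h2k.le hB0, mul_nonneg h2k.le hR0]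
  -- main estimate
  by_cases hAi : IntegrableOn (fun s => s^(k-2)*(g s)^2) (Ioc (0:ℝ) L)
  swap
  · rw [integral_undef hAi]
    have hc0 : (0:ℝ) ≤ (2/(k-1)) * (4*2^k + 2/(k-1)) := by positivity
    exact mul_nonneg hc0 hR0
  apply integral_Ioc_le_of_forall hL hAi
  intro ε hε hεL
  have hsub : Icc ε L ⊆ Ioc (0:ℝ) L := fun s hs => ⟨lt_of_lt_of_le hε hs.1, hs.2⟩
  have hibp := ibp (c := 0) (k := k) hε hεL.le (fun s hs => hg s (hsub hs)) (hg'.mono hsub)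
  simp only [sub_zero] at hibp
  have hrpe : ∀ p : ℝ, ContinuousOn (fun s : ℝ => s^p) (Icc ε L) := fun p =>
    continuousOn_id.rpow_const (fun s hs => Or.inl (lt_of_lt_of_le hε hs.1).ne')
  have hgce : ContinuousOn g (Icc ε L) := hgc.mono hsub
  have hg'e : ContinuousOn g' (Icc ε L) := hg'.mono hsub
  have hIcc : uIcc ε L = Icc ε L := uIcc_of_le hεL.le
  have hi1 : IntervalIntegrable (fun s => s^(k-2)*(g s)^2) volume ε L := by
    apply ContinuousOn.intervalIntegrable; rw [hIcc]; exact (hrpe _).mul (hgce.pow 2)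
  have hi2 : IntervalIntegrable (fun s => s^(k-1)*(2*(g s)*(g' s))) volume ε L := by
    apply ContinuousOn.intervalIntegrable; rw [hIcc]
    exact (hrpe _).mul ((continuousOn_const.mul hgce).mul hg'e)
  have hi3 : IntervalIntegrable (fun s => s^k*(g' s)^2) volume ε L := by
    apply ContinuousOn.intervalIntegrable; rw [hIcc]; exact (hrpe _).mul (hg'e.pow 2)
  have hsplit : ∫ s in ε..L, ((k-1) * (s^(k-2) * (g s)^2) + s^(k-1) * (2*(g s) * (g' s)))
      = (k-1) * (∫ s in ε..L, s^(k-2)*(g s)^2) + ∫ s in ε..L, s^(k-1)*(2*(g s)*(g' s)) := by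
    rw [intervalIntegral.integral_add (hi1.const_mul _) hi2, intervalIntegral.integral_const_mul]
  have hpt : ∀ s ∈ Icc ε L, -(s^(k-1)*(2*(g s)*(g' s)))
      ≤ ((k-1)/2)*(s^(k-2)*(g s)^2) + (2/(k-1))*(s^k*(g' s)^2) := by
    intro s hs
    have hspos : 0 < s := lt_of_lt_of_le hε hs.1
    have hl : (0:ℝ) < (k-1)/2 := by linarith
    have h := amgm hl (s^((k-2)/2)*(g s)) (s^(k/2)*(g' s))
    have e1 : (s^((k-2)/2))^2 = s^(k-2) := by
      rw [rpow_sq hspos]; congr 1; ring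
    have e2 : (s^(k/2))^2 = s^k := by
      rw [rpow_sq hspos]; congr 1; ring
    have e3 : s^((k-2)/2) * s^(k/2) = s^(k-1) := by
      rw [← Real.rpow_add hspos]
      congr 1
      ring
    have hinv : ((k-1)/2)⁻¹ = 2/(k-1) := by rw [inv_div]
    calc -(s^(k-1)*(2*(g s)*(g' s)))
        = -(2*((s^((k-2)/2)*(g s))*(s^(k/2)*(g' s)))) := by rw [← e3]; ring
      _ ≤ ((k-1)/2)*(s^((k-2)/2)*(g s))^2 + ((k-1)/2)⁻¹*(s^(k/2)*(g' s))^2 := h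
      _ = ((k-1)/2)*(s^(k-2)*(g s)^2) + (2/(k-1))*(s^k*(g' s)^2) := by
          rw [mul_pow, mul_pow, e1, e2, hinv]
  have hcross : -(∫ s in ε..L, s^(k-1)*(2*(g s)*(g' s)))
      ≤ ((k-1)/2)*(∫ s in ε..L, s^(k-2)*(g s)^2) + (2/(k-1))*(∫ s in ε..L, s^k*(g' s)^2) := by
    rw [← intervalIntegral.integral_neg]
    calc ∫ s in ε..L, -(s^(k-1)*(2*(g s)*(g' s)))
        ≤ ∫ s in ε..L, (((k-1)/2)*(s^(k-2)*(g s)^2) + (2/(k-1))*(s^k*(g' s)^2)) :=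
          intervalIntegral.integral_mono_on hεL.le hi2.neg
            ((hi1.const_mul _).add (hi3.const_mul _)) hpt
      _ = _ := by
          rw [intervalIntegral.integral_add (hi1.const_mul _) (hi3.const_mul _),
            intervalIntegral.integral_const_mul, intervalIntegral.integral_const_mul]
  have hBε : ∫ s in ε..L, s^k*(g' s)^2 ≤ B := by
    rw [intervalIntegral.integral_of_le hεL.le]
    exact setIntegral_mono_set hBi ((ae_restrict_iff' measurableSet_Ioc).2
      (Eventually.of_forall (fun s hs => mul_nonneg (Real.rpow_nonneg hs.1.le _) (sq_nonneg _))))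
      (Ioc_subset_Ioc_left hε.le).eventuallyLE
  have hεnn : 0 ≤ ε^(k-1)*(g ε)^2 := mul_nonneg (Real.rpow_nonneg hε.le _) (sq_nonneg _)
  have key : ((k-1)/2) * (∫ s in ε..L, s^(k-2)*(g s)^2) ≤ 4*2^k*R + (2/(k-1))*R := by
    have h1 : (2/(k-1))*(∫ s in ε..L, s^k*(g' s)^2) ≤ (2/(k-1))*B :=
      mul_le_mul_of_nonneg_left hBε (by positivity)
    have h2 : (2/(k-1))*B ≤ (2/(k-1))*R := mul_le_mul_of_nonneg_left hBR (by positivity)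
    rw [hsplit] at hibp
    linarith [hibp, hcross, hbd', hεnn, h1, h2]
  rw [intervalIntegral.integral_of_le hεL.le] at key
  have hfinal := mul_le_mul_of_nonneg_left key (by positivity : (0:ℝ) ≤ 2/(k-1))
  have e : (2/(k-1))*(((k-1)/2) * (∫ s in Ioc ε L, s^(k-2)*(g s)^2))
      = ∫ s in Ioc ε L, s^(k-2)*(g s)^2 := by
    field_simp
  rw [e] at hfinal
  calc (∫ s in Ioc ε L, s^(k-2)*(g s)^2) ≤ (2/(k-1))*(4*2^k*R + (2/(k-1))*R) := hfinal
    _ = ((2/(k-1)) * (4*2^k + 2/(k-1))) * R := by ring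

lemma partC {k ω L : ℝ} (hk : 1 < k) (hω : 0 < ω) (hωL : ω ≤ L) {g g' : ℝ → ℝ}
    (hg : ∀ s ∈ Ioc (0:ℝ) L, HasDerivAt g (g' s) s)
    (hg' : ContinuousOn g' (Ioc (0:ℝ) L))
    (hGi : IntegrableOn (fun s => s^k*(g s)^2) (Ioc (0:ℝ) ω))
    (hBi : IntegrableOn (fun s => s^(k-2)*(g' s)^2) (Ioc (0:ℝ) ω)) :
    (∫ s in Ioc (0:ℝ) ω, s^(k-2)*(g s)^2)
      ≤ ((4*2^k+2)/(k-1)) / ω^2 * (∫ s in Ioc (0:ℝ) ω, s^k*(g s)^2)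
        + ((4*2^k+2)/(k-1)) * ω^2 * ∫ s in Ioc (0:ℝ) ω, s^(k-2)*(g' s)^2 := by
  have hk1 : (0:ℝ) < k - 1 := by linarith
  have h2k : (0:ℝ) < 2^k := Real.rpow_pos_of_pos two_pos k
  have hgc : ContinuousOn g (Ioc (0:ℝ) L) := fun s hs =>
    ((hg s hs).continuousAt).continuousWithinAt
  set G := ∫ s in Ioc (0:ℝ) ω, s^k*(g s)^2 with hGdef
  set Bm := ∫ s in Ioc (0:ℝ) ω, s^(k-2)*(g' s)^2 with hBdef
  have hG0 : 0 ≤ G := setIntegral_nonneg measurableSet_Ioc (fun s hs =>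
    mul_nonneg (Real.rpow_nonneg hs.1.le _) (sq_nonneg _))
  have hB0 : 0 ≤ Bm := setIntegral_nonneg measurableSet_Ioc (fun s hs =>
    mul_nonneg (Real.rpow_nonneg hs.1.le _) (sq_nonneg _))
  -- boundary
  have hsubω : Icc (ω/2) ω ⊆ Ioc (0:ℝ) L := fun s hs =>
    ⟨lt_of_lt_of_le (by linarith) hs.1, hs.2.trans hωL⟩
  have hbd := bdry_weighted (k := k) (m := k-2) (by linarith) hω
    (fun s hs => hg s (hsubω hs)) (hg'.mono hsubω) hGi hBi
  have e2ω : ω^(k-(k-2)) = ω^2 := by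
    rw [show k-(k-2) = ((2:ℕ):ℝ) by push_cast; ring, Real.rpow_natCast]
  rw [e2ω] at hbd
  have habs : (2:ℝ)^|k-2| ≤ 2^k :=
    Real.rpow_le_rpow_of_exponent_le one_le_two (abs_le.mpr ⟨by linarith, by linarith⟩)
  have hbd' : ω^(k-1)*(g ω)^2 ≤ 3*2^k/ω^2*G + 2^k*ω^2*Bm := by
    have h1 : 2^|k-2| * ω^2 * Bm ≤ 2^k * ω^2 * Bm := by
      apply mul_le_mul_of_nonneg_right _ hB0
      exact mul_le_mul_of_nonneg_right habs (sq_nonneg ω)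
    linarith [hbd]
  -- main estimate
  by_cases hAi : IntegrableOn (fun s => s^(k-2)*(g s)^2) (Ioc (0:ℝ) ω)
  swap
  · rw [integral_undef hAi]
    have hc0 : (0:ℝ) ≤ (4*2^k+2)/(k-1) := by positivity
    have := mul_nonneg (mul_nonneg hc0 (sq_nonneg ω)) hB0
    have := mul_nonneg (div_nonneg hc0 (sq_nonneg ω)) hG0
    linarith
  apply integral_Ioc_le_of_forall hω hAi
  intro ε hε hεω
  have hsub : Icc ε ω ⊆ Ioc (0:ℝ) L := fun s hs =>
    ⟨lt_of_lt_of_le hε hs.1, hs.2.trans hωL⟩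
  have hibp := ibp (c := 0) (k := k) hε hεω.le (fun s hs => hg s (hsub hs)) (hg'.mono hsub)
  simp only [sub_zero] at hibp
  have hrpe : ∀ p : ℝ, ContinuousOn (fun s : ℝ => s^p) (Icc ε ω) := fun p =>
    continuousOn_id.rpow_const (fun s hs => Or.inl (lt_of_lt_of_le hε hs.1).ne')
  have hgce : ContinuousOn g (Icc ε ω) := hgc.mono hsub
  have hg'e : ContinuousOn g' (Icc ε ω) := hg'.mono hsub
  have hIcc : uIcc ε ω = Icc ε ω := uIcc_of_le hεω.le
  have hi1 : IntervalIntegrable (fun s => s^(k-2)*(g s)^2) volume ε ω := by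
    apply ContinuousOn.intervalIntegrable; rw [hIcc]; exact (hrpe _).mul (hgce.pow 2)
  have hi2 : IntervalIntegrable (fun s => s^(k-1)*(2*(g s)*(g' s))) volume ε ω := by
    apply ContinuousOn.intervalIntegrable; rw [hIcc]
    exact (hrpe _).mul ((continuousOn_const.mul hgce).mul hg'e)
  have hi3 : IntervalIntegrable (fun s => s^k*(g s)^2) volume ε ω := by
    apply ContinuousOn.intervalIntegrable; rw [hIcc]; exact (hrpe _).mul (hgce.pow 2)
  have hi4 : IntervalIntegrable (fun s => s^(k-2)*(g' s)^2) volume ε ω := by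
    apply ContinuousOn.intervalIntegrable; rw [hIcc]; exact (hrpe _).mul (hg'e.pow 2)
  have hsplit : ∫ s in ε..ω, ((k-1) * (s^(k-2) * (g s)^2) + s^(k-1) * (2*(g s) * (g' s)))
      = (k-1) * (∫ s in ε..ω, s^(k-2)*(g s)^2) + ∫ s in ε..ω, s^(k-1)*(2*(g s)*(g' s)) := by
    rw [intervalIntegral.integral_add (hi1.const_mul _) hi2, intervalIntegral.integral_const_mul]
  have hpt : ∀ s ∈ Icc ε ω, -(s^(k-1)*(2*(g s)*(g' s)))
      ≤ (1/ω^2)*(s^k*(g s)^2) + ω^2*(s^(k-2)*(g' s)^2) := by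
    intro s hs
    have hspos : 0 < s := lt_of_lt_of_le hε hs.1
    have hl : (0:ℝ) < (ω^2)⁻¹ := by positivity
    have h := amgm hl (s^(k/2)*(g s)) (s^((k-2)/2)*(g' s))
    have e1 : (s^(k/2))^2 = s^k := by rw [rpow_sq hspos]; congr 1; ring
    have e2 : (s^((k-2)/2))^2 = s^(k-2) := by rw [rpow_sq hspos]; congr 1; ring
    have e3 : s^(k/2) * s^((k-2)/2) = s^(k-1) := by
      rw [← Real.rpow_add hspos]; congr 1; ring
    have hinv : ((ω^2)⁻¹)⁻¹ = ω^2 := inv_inv _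
    calc -(s^(k-1)*(2*(g s)*(g' s)))
        = -(2*((s^(k/2)*(g s))*(s^((k-2)/2)*(g' s)))) := by rw [← e3]; ring
      _ ≤ (ω^2)⁻¹*(s^(k/2)*(g s))^2 + ((ω^2)⁻¹)⁻¹*(s^((k-2)/2)*(g' s))^2 := h
      _ = (1/ω^2)*(s^k*(g s)^2) + ω^2*(s^(k-2)*(g' s)^2) := by
          rw [mul_pow, mul_pow, e1, e2, hinv, inv_eq_one_div]
  have hcross : -(∫ s in ε..ω, s^(k-1)*(2*(g s)*(g' s)))
      ≤ (1/ω^2)*(∫ s in ε..ω, s^k*(g s)^2) + ω^2*(∫ s in ε..ω, s^(k-2)*(g' s)^2) := by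
    rw [← intervalIntegral.integral_neg]
    calc ∫ s in ε..ω, -(s^(k-1)*(2*(g s)*(g' s)))
        ≤ ∫ s in ε..ω, ((1/ω^2)*(s^k*(g s)^2) + ω^2*(s^(k-2)*(g' s)^2)) :=
          intervalIntegral.integral_mono_on hεω.le hi2.neg
            ((hi3.const_mul _).add (hi4.const_mul _)) hpt
      _ = _ := by
          rw [intervalIntegral.integral_add (hi3.const_mul _) (hi4.const_mul _),
            intervalIntegral.integral_const_mul, intervalIntegral.integral_const_mul]
  have hnnae : ∀ p : ℝ, 0 ≤ᵐ[volume.restrict (Ioc (0:ℝ) ω)] fun s => s^p*(g s)^2 := fun p =>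
    (ae_restrict_iff' measurableSet_Ioc).2 (Eventually.of_forall (fun s hs =>
      mul_nonneg (Real.rpow_nonneg hs.1.le _) (sq_nonneg _)))
  have hGε : ∫ s in ε..ω, s^k*(g s)^2 ≤ G := by
    rw [intervalIntegral.integral_of_le hεω.le]
    exact setIntegral_mono_set hGi (hnnae k) (Ioc_subset_Ioc_left hε.le).eventuallyLE
  have hBε : ∫ s in ε..ω, s^(k-2)*(g' s)^2 ≤ Bm := by
    rw [intervalIntegral.integral_of_le hεω.le]
    exact setIntegral_mono_set hBi ((ae_restrict_iff' measurableSet_Ioc).2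
      (Eventually.of_forall (fun s hs => mul_nonneg (Real.rpow_nonneg hs.1.le _) (sq_nonneg _))))
      (Ioc_subset_Ioc_left hε.le).eventuallyLE
  have hεnn : 0 ≤ ε^(k-1)*(g ε)^2 := mul_nonneg (Real.rpow_nonneg hε.le _) (sq_nonneg _)
  have key : (k-1) * (∫ s in ε..ω, s^(k-2)*(g s)^2)
      ≤ (4*2^k+2)/ω^2*G + (4*2^k+2)*ω^2*Bm := by
    have h1 : (1/ω^2)*(∫ s in ε..ω, s^k*(g s)^2) ≤ (1/ω^2)*G :=
      mul_le_mul_of_nonneg_left hGε (by positivity)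
    have h2 : ω^2*(∫ s in ε..ω, s^(k-2)*(g' s)^2) ≤ ω^2*Bm :=
      mul_le_mul_of_nonneg_left hBε (sq_nonneg ω)
    rw [hsplit] at hibp
    have hco : (3*2^k+1)/ω^2 ≤ (4*2^k+2)/ω^2 := by gcongr <;> norm_num
    have h3 : (3*2^k+1)/ω^2*G ≤ (4*2^k+2)/ω^2*G := mul_le_mul_of_nonneg_right hco hG0
    have h3' : 3*2^k/ω^2*G + 1/ω^2*G = (3*2^k+1)/ω^2*G := by ring
    have hco2 : (2^k+1)*ω^2 ≤ (4*2^k+2)*ω^2 :=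
      mul_le_mul_of_nonneg_right (by linarith) (sq_nonneg ω)
    have h4 : (2^k+1)*ω^2*Bm ≤ (4*2^k+2)*ω^2*Bm := mul_le_mul_of_nonneg_right hco2 hB0
    have h4' : 2^k*ω^2*Bm + ω^2*Bm = (2^k+1)*ω^2*Bm := by ring
    linarith [hibp, hcross, hbd', hεnn, h1, h2]
  rw [intervalIntegral.integral_of_le hεω.le] at key
  have e : (k-1) * (((4*2^k+2)/(k-1))/ω^2*(G:ℝ) + ((4*2^k+2)/(k-1))*ω^2*Bm)
      = (4*2^k+2)/ω^2*G + (4*2^k+2)*ω^2*Bm := by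
    field_simp
  exact le_of_mul_le_mul_left (key.trans_eq e.symm) hk1

lemma diff_bound {L k : ℝ} (hk : k < 1) {g g' : ℝ → ℝ}
    (hg : ∀ s ∈ Ioc (0:ℝ) L, HasDerivAt g (g' s) s)
    (hg' : ContinuousOn g' (Ioc (0:ℝ) L))
    (hBi : IntegrableOn (fun s => s^k*(g' s)^2) (Ioc (0:ℝ) L))
    {x y l : ℝ} (hx : 0 < x) (hxy : x ≤ y) (hyL : y ≤ L) (hl : 0 < l) :
    |g y - g x| ≤ (l * (y^(1-k)/(1-k)) + l⁻¹ * ∫ s in Ioc (0:ℝ) y, s^k*(g' s)^2)/2 := by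
  have hk1 : (0:ℝ) < 1 - k := by linarith
  have hsub : Icc x y ⊆ Ioc (0:ℝ) L := fun s hs => ⟨lt_of_lt_of_le hx hs.1, hs.2.trans hyL⟩
  have hIcc : uIcc x y = Icc x y := uIcc_of_le hxy
  have hg'c : ContinuousOn g' (Icc x y) := hg'.mono hsub
  have hrpe : ∀ p : ℝ, ContinuousOn (fun s : ℝ => s^p) (Icc x y) := fun p =>
    continuousOn_id.rpow_const (fun s hs => Or.inl (lt_of_lt_of_le hx hs.1).ne')
  have hftc : ∫ s in x..y, g' s = g y - g x := by
    apply intervalIntegral.integral_eq_sub_of_hasDerivAt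
    · intro s hs
      exact hg s (hsub (by rwa [hIcc] at hs))
    · apply ContinuousOn.intervalIntegrable; rw [hIcc]; exact hg'c
  have habs : |g y - g x| ≤ ∫ s in x..y, |g' s| := by
    rw [← hftc]
    exact intervalIntegral.abs_integral_le_integral_abs hxy
  have hpt : ∀ s ∈ Icc x y, |g' s| ≤ (l/2)*s^(-k) + (l⁻¹/2)*(s^k*(g' s)^2) := by
    intro s hs
    have hspos : 0 < s := lt_of_lt_of_le hx hs.1
    have hu : (0:ℝ) ≤ s^(-k) := Real.rpow_nonneg hspos.le _
    have hv : (0:ℝ) ≤ s^k*(g' s)^2 := mul_nonneg (Real.rpow_nonneg hspos.le _) (sq_nonneg _)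
    have hw : |g' s|^2 = s^(-k)*(s^k*(g' s)^2) := by
      rw [sq_abs, ← mul_assoc, ← Real.rpow_add hspos]
      norm_num
    have := amgm2 hl hu hv hw
    linarith [this]
  have hint : ∫ s in x..y, |g' s| ≤ ∫ s in x..y, ((l/2)*s^(-k) + (l⁻¹/2)*(s^k*(g' s)^2)) := by
    apply intervalIntegral.integral_mono_on hxy
    · apply ContinuousOn.intervalIntegrable; rw [hIcc]; exact hg'c.abs
    · apply ContinuousOn.intervalIntegrable; rw [hIcc]
      exact (continuousOn_const.mul (hrpe _)).add
        (continuousOn_const.mul ((hrpe _).mul (hg'c.pow 2)))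
    · exact hpt
  have hi1 : IntervalIntegrable (fun s : ℝ => s^(-k)) volume x y := by
    apply ContinuousOn.intervalIntegrable; rw [hIcc]; exact hrpe _
  have hi2 : IntervalIntegrable (fun s => s^k*(g' s)^2) volume x y := by
    apply ContinuousOn.intervalIntegrable; rw [hIcc]; exact (hrpe _).mul (hg'c.pow 2)
  have hsplit : ∫ s in x..y, ((l/2)*s^(-k) + (l⁻¹/2)*(s^k*(g' s)^2))
      = (l/2)*(∫ s in x..y, s^(-k)) + (l⁻¹/2)*(∫ s in x..y, s^k*(g' s)^2) := by
    rw [intervalIntegral.integral_add (hi1.const_mul _) (hi2.const_mul _),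
      intervalIntegral.integral_const_mul, intervalIntegral.integral_const_mul]
  have hrint : ∫ s in x..y, s^(-k) ≤ y^(1-k)/(1-k) := by
    rw [integral_rpow (Or.inl (by linarith))]
    have hxnn : (0:ℝ) ≤ x^(-k+1) := Real.rpow_nonneg hx.le _
    have e : -k+1 = 1-k := by ring
    rw [e]
    exact (div_le_div_iff_of_pos_right hk1).mpr (by linarith [Real.rpow_nonneg hx.le (1-k)])
  have hBy : ∫ s in x..y, s^k*(g' s)^2 ≤ ∫ s in Ioc (0:ℝ) y, s^k*(g' s)^2 := by
    rw [intervalIntegral.integral_of_le hxy]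
    exact setIntegral_mono_set (hBi.mono_set (Ioc_subset_Ioc_right hyL))
      ((ae_restrict_iff' measurableSet_Ioc).2 (Eventually.of_forall (fun s hs =>
        mul_nonneg (Real.rpow_nonneg hs.1.le _) (sq_nonneg _))))
      (Ioc_subset_Ioc_left hx.le).eventuallyLE
  have h5 : (l/2)*(∫ s in x..y, s^(-k)) ≤ (l/2)*(y^(1-k)/(1-k)) :=
    mul_le_mul_of_nonneg_left hrint (by positivity)
  have h6 : (l⁻¹/2)*(∫ s in x..y, s^k*(g' s)^2)
      ≤ (l⁻¹/2)*(∫ s in Ioc (0:ℝ) y, s^k*(g' s)^2) :=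
    mul_le_mul_of_nonneg_left hBy (by positivity)
  linarith [habs, hint, hsplit, h5, h6]

set_option maxHeartbeats 1000000 in
lemma partB_limit {L k : ℝ} (hk : k < 1) (hL : 0 < L) {g g' : ℝ → ℝ}
    (hg : ∀ s ∈ Ioc (0:ℝ) L, HasDerivAt g (g' s) s)
    (hg' : ContinuousOn g' (Ioc (0:ℝ) L))
    (hBi : IntegrableOn (fun s => s^k*(g' s)^2) (Ioc (0:ℝ) L)) :
    ∃ g₀ : ℝ, Tendsto g (nhdsWithin 0 (Ioi 0)) (nhds g₀) ∧
      ∀ x ∈ Ioc (0:ℝ) L,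
        (g x - g₀)^2 ≤ (x^(1-k)/(1-k)) * ∫ s in Ioc (0:ℝ) x, s^k*(g' s)^2 := by
  have hk1 : (0:ℝ) < 1 - k := by linarith
  have hnn : ∀ t : ℝ, 0 ≤ ∫ s in Ioc (0:ℝ) t, s^k*(g' s)^2 := fun t =>
    setIntegral_nonneg measurableSet_Ioc (fun s hs =>
      mul_nonneg (Real.rpow_nonneg hs.1.le _) (sq_nonneg _))
  have hBmono : ∀ t u : ℝ, t ≤ u → u ≤ L →
      (∫ s in Ioc (0:ℝ) t, s^k*(g' s)^2) ≤ ∫ s in Ioc (0:ℝ) u, s^k*(g' s)^2 := by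
    intro t u htu huL
    exact setIntegral_mono_set (hBi.mono_set (Ioc_subset_Ioc_right huL))
      ((ae_restrict_iff' measurableSet_Ioc).2 (Eventually.of_forall (fun s hs =>
        mul_nonneg (Real.rpow_nonneg hs.1.le _) (sq_nonneg _))))
      (Ioc_subset_Ioc_right htu).eventuallyLE
  -- B(L/(n+2)) → 0
  have hs : ∀ n : ℕ, MeasurableSet (Ioc (L/(n+2):ℝ) L) := fun n => measurableSet_Ioc
  have hmono : Monotone (fun n : ℕ => Ioc (L/(n+2):ℝ) L) := by
    intro n m hnm
    apply Ioc_subset_Ioc_left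
    apply div_le_div_of_nonneg_left hL.le (by positivity)
    have : (n:ℝ) ≤ m := Nat.cast_le.mpr hnm
    linarith
  have hU : (⋃ n : ℕ, Ioc (L/(n+2):ℝ) L) = Ioc 0 L := by
    ext x
    simp only [mem_iUnion, mem_Ioc]
    constructor
    · rintro ⟨n, h1, h2⟩
      have : (0:ℝ) < L/(n+2) := by positivity
      exact ⟨this.trans h1, h2⟩
    · rintro ⟨hx0, hxL⟩
      obtain ⟨n, hn⟩ := exists_nat_gt (L/x)
      refine ⟨n, ?_, hxL⟩
      rw [div_lt_iff₀ (by positivity)]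
      have h2 : L/x < (n:ℝ)+2 := by linarith
      calc L = (L/x)*x := by field_simp
        _ < ((n:ℝ)+2)*x := mul_lt_mul_of_pos_right h2 hx0
        _ = x*((n:ℝ)+2) := by ring
  have hBiU : IntegrableOn (fun s => s^k*(g' s)^2) (⋃ n : ℕ, Ioc (L/(n+2):ℝ) L) := by
    rw [hU]; exact hBi
  have htail := tendsto_setIntegral_of_monotone hs hmono hBiU
  rw [hU] at htail
  have hBeq : ∀ n : ℕ, (∫ s in Ioc (0:ℝ) (L/(n+2)), s^k*(g' s)^2)
      = (∫ s in Ioc (0:ℝ) L, s^k*(g' s)^2) - ∫ s in Ioc (L/(n+2):ℝ) L, s^k*(g' s)^2 := by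
    intro n
    have hpos : (0:ℝ) < L/(n+2) := by positivity
    have hle : L/(n+2) ≤ L := by
      apply div_le_self hL.le
      have : (0:ℝ) ≤ n := Nat.cast_nonneg n
      linarith
    have hun : Ioc (0:ℝ) (L/(n+2)) ∪ Ioc (L/(n+2):ℝ) L = Ioc (0:ℝ) L :=
      Ioc_union_Ioc_eq_Ioc hpos.le hle
    have := MeasureTheory.setIntegral_union (f := fun s => s^k*(g' s)^2) (μ := volume)
      (s := Ioc (0:ℝ) (L/(n+2))) (t := Ioc (L/(n+2):ℝ) L)
      (Ioc_disjoint_Ioc_of_le le_rfl) measurableSet_Ioc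
      (hBi.mono_set (by rw [← hun]; exact subset_union_left))
      (hBi.mono_set (by rw [← hun]; exact subset_union_right))
    rw [hun] at this
    linarith [this]
  have hBtend : Tendsto (fun n : ℕ => ∫ s in Ioc (0:ℝ) (L/(n+2)), s^k*(g' s)^2)
      atTop (nhds 0) := by
    simp_rw [hBeq]
    have := htail.const_sub (∫ s in Ioc (0:ℝ) L, s^k*(g' s)^2)
    simpa using this
  -- (L/(n+2))^(1-k)/(1-k) → 0
  have htn : Tendsto (fun n : ℕ => L/((n:ℝ)+2)) atTop (nhds 0) := by
    apply Tendsto.div_atTop (tendsto_const_nhds (x := L))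
    exact tendsto_atTop_add_const_right _ 2 tendsto_natCast_atTop_atTop
  have hrtend : Tendsto (fun n : ℕ => (L/((n:ℝ)+2))^(1-k)/(1-k)) atTop (nhds 0) := by
    have hc : ContinuousAt (fun x : ℝ => x^(1-k)) 0 :=
      Real.continuousAt_rpow_const 0 (1-k) (Or.inr hk1.le)
    have h1 : Tendsto (fun n : ℕ => (L/((n:ℝ)+2))^(1-k)) atTop (nhds ((0:ℝ)^(1-k))) :=
      (hc.tendsto).comp htn
    rw [Real.zero_rpow hk1.ne'] at h1
    simpa using h1.div_const (1-k)
  -- Cauchy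
  have hC : Cauchy (map g (nhdsWithin 0 (Ioi (0:ℝ)))) := by
    rw [Metric.cauchy_iff]
    refine ⟨Filter.map_neBot, ?_⟩
    intro δ hδ
    have hsum : Tendsto (fun n : ℕ => (L/((n:ℝ)+2))^(1-k)/(1-k)
        + ∫ s in Ioc (0:ℝ) (L/(n+2)), s^k*(g' s)^2) atTop (nhds 0) := by
      simpa using hrtend.add hBtend
    obtain ⟨n, hn⟩ := (hsum.eventually (gt_mem_nhds hδ)).exists
    set t := L/((n:ℝ)+2) with htdef
    have htpos : 0 < t := by positivity
    have htL : t ≤ L := by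
      apply div_le_self hL.le
      have : (0:ℝ) ≤ n := Nat.cast_nonneg n
      linarith
    refine ⟨g '' Ioc 0 t, ?_, ?_⟩
    · apply image_mem_map
      exact Ioc_mem_nhdsGT_of_mem ⟨le_rfl, htpos⟩
    · rintro u ⟨a, ha, rfl⟩ v ⟨b, hb, rfl⟩
      have hbound : ∀ p q : ℝ, p ∈ Ioc (0:ℝ) t → q ∈ Ioc (0:ℝ) t → p ≤ q →
          dist (g p) (g q) < δ := by
        intro p q hp hq hpq
        have hd := diff_bound hk hg hg' hBi hp.1 hpq (hq.2.trans htL) one_pos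
        rw [Real.dist_eq, abs_sub_comm]
        have h1 : q^(1-k) ≤ t^(1-k) := Real.rpow_le_rpow hq.1.le hq.2 hk1.le
        have h2 : (∫ s in Ioc (0:ℝ) q, s^k*(g' s)^2)
            ≤ ∫ s in Ioc (0:ℝ) t, s^k*(g' s)^2 := hBmono q t hq.2 htL
        have h3 : q^(1-k)/(1-k) ≤ t^(1-k)/(1-k) :=
          (div_le_div_iff_of_pos_right hk1).mpr h1
        have h4 : 0 ≤ q^(1-k)/(1-k) := div_nonneg (Real.rpow_nonneg hq.1.le _) hk1.le
        calc |g q - g p| ≤ (1 * (q^(1-k)/(1-k)) + 1⁻¹ * ∫ s in Ioc (0:ℝ) q, s^k*(g' s)^2)/2 := hd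
          _ < δ := by
              simp only [one_mul, inv_one]
              linarith [hn, hnn q, hnn t, h3, h2]
      rcases le_total a b with h | h
      · exact hbound a b ha hb h
      · rw [dist_comm]
        exact hbound b a hb ha h
  obtain ⟨g₀, hg₀⟩ := CompleteSpace.complete hC
  refine ⟨g₀, hg₀, ?_⟩
  intro x hx
  have hax : 0 < x^(1-k)/(1-k) := div_pos (Real.rpow_pos_of_pos hx.1 _) hk1
  have hforall : ∀ l : ℝ, 0 < l → |g x - g₀| ≤
      (l*(x^(1-k)/(1-k)) + l⁻¹*(∫ s in Ioc (0:ℝ) x, s^k*(g' s)^2))/2 := by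
    intro l hl
    have htend : Tendsto (fun y => |g x - g y|) (nhdsWithin 0 (Ioi (0:ℝ)))
        (nhds (|g x - g₀|)) := (tendsto_const_nhds.sub hg₀).abs
    apply le_of_tendsto htend
    filter_upwards [Ioc_mem_nhdsGT_of_mem ⟨le_rfl, hx.1⟩] with y hy
    exact diff_bound hk hg hg' hBi hy.1 hy.2 hx.2 hl
  have hsq := sq_le_of_forall_amgm (abs_nonneg (g x - g₀)) hax (hnn x) hforall
  rwa [sq_abs] at hsq

set_option maxHeartbeats 1000000 in
lemma partB {L k : ℝ} (hk : k < 1) (hL : 0 < L) {g g' : ℝ → ℝ}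
    (hg : ∀ s ∈ Ioc (0:ℝ) L, HasDerivAt g (g' s) s)
    (hg' : ContinuousOn g' (Ioc (0:ℝ) L))
    (hBi : IntegrableOn (fun s => s^k*(g' s)^2) (Ioc (0:ℝ) L)) :
    ∃ g₀ : ℝ, Tendsto g (nhdsWithin 0 (Ioi 0)) (nhds g₀) ∧
      (∫ s in Ioc (0:ℝ) L, s^(k-2)*(g s - g₀)^2)
        ≤ (6/(1-k)^2) * ∫ s in Ioc (0:ℝ) L, s^k*(g' s)^2 := by
  obtain ⟨g₀, hg₀, hptb⟩ := partB_limit hk hL hg hg' hBi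
  refine ⟨g₀, hg₀, ?_⟩
  have hk1 : (0:ℝ) < 1 - k := by linarith
  set Bt := ∫ s in Ioc (0:ℝ) L, s^k*(g' s)^2 with hBtdef
  have hBt0 : 0 ≤ Bt := setIntegral_nonneg measurableSet_Ioc (fun s hs =>
    mul_nonneg (Real.rpow_nonneg hs.1.le _) (sq_nonneg _))
  have hgc : ContinuousOn g (Ioc (0:ℝ) L) := fun s hs =>
    ((hg s hs).continuousAt).continuousWithinAt
  by_cases hAi : IntegrableOn (fun s => s^(k-2)*(g s - g₀)^2) (Ioc (0:ℝ) L)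
  swap
  · rw [integral_undef hAi]
    exact mul_nonneg (by positivity) hBt0
  apply integral_Ioc_le_of_forall hL hAi
  intro ε hε hεL
  have hsub : Icc ε L ⊆ Ioc (0:ℝ) L := fun s hs => ⟨lt_of_lt_of_le hε hs.1, hs.2⟩
  have hibp := ibp (c := g₀) (k := k) hε hεL.le (fun s hs => hg s (hsub hs)) (hg'.mono hsub)
  have hrpe : ∀ p : ℝ, ContinuousOn (fun s : ℝ => s^p) (Icc ε L) := fun p =>
    continuousOn_id.rpow_const (fun s hs => Or.inl (lt_of_lt_of_le hε hs.1).ne')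
  have hgce : ContinuousOn (fun s => g s - g₀) (Icc ε L) :=
    (hgc.mono hsub).sub continuousOn_const
  have hg'e : ContinuousOn g' (Icc ε L) := hg'.mono hsub
  have hIcc : uIcc ε L = Icc ε L := uIcc_of_le hεL.le
  have hi1 : IntervalIntegrable (fun s => s^(k-2)*(g s - g₀)^2) volume ε L := by
    apply ContinuousOn.intervalIntegrable; rw [hIcc]; exact (hrpe _).mul (hgce.pow 2)
  have hi2 : IntervalIntegrable (fun s => s^(k-1)*(2*(g s - g₀)*(g' s))) volume ε L := by
    apply ContinuousOn.intervalIntegrable; rw [hIcc]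
    exact (hrpe _).mul ((continuousOn_const.mul hgce).mul hg'e)
  have hi3 : IntervalIntegrable (fun s => s^k*(g' s)^2) volume ε L := by
    apply ContinuousOn.intervalIntegrable; rw [hIcc]; exact (hrpe _).mul (hg'e.pow 2)
  have hsplit : ∫ s in ε..L, ((k-1) * (s^(k-2) * (g s - g₀)^2) + s^(k-1) * (2*(g s - g₀) * g' s))
      = (k-1) * (∫ s in ε..L, s^(k-2)*(g s - g₀)^2)
        + ∫ s in ε..L, s^(k-1)*(2*(g s - g₀)*(g' s)) := by
    rw [intervalIntegral.integral_add (hi1.const_mul _) hi2, intervalIntegral.integral_const_mul]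
  have hpt : ∀ s ∈ Icc ε L, s^(k-1)*(2*(g s - g₀)*(g' s))
      ≤ ((1-k)/2)*(s^(k-2)*(g s - g₀)^2) + (2/(1-k))*(s^k*(g' s)^2) := by
    intro s hs
    have hspos : 0 < s := lt_of_lt_of_le hε hs.1
    have hl : (0:ℝ) < (1-k)/2 := by linarith
    have h := amgm hl (s^((k-2)/2)*(g s - g₀)) (-(s^(k/2)*(g' s)))
    have e1 : (s^((k-2)/2))^2 = s^(k-2) := by rw [rpow_sq hspos]; congr 1; ring
    have e2 : (s^(k/2))^2 = s^k := by rw [rpow_sq hspos]; congr 1; ring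
    have e3 : s^((k-2)/2) * s^(k/2) = s^(k-1) := by
      rw [← Real.rpow_add hspos]; congr 1; ring
    have hinv : ((1-k)/2)⁻¹ = 2/(1-k) := by rw [inv_div]
    calc s^(k-1)*(2*(g s - g₀)*(g' s))
        = -(2*((s^((k-2)/2)*(g s - g₀))*(-(s^(k/2)*(g' s))))) := by rw [← e3]; ring
      _ ≤ ((1-k)/2)*(s^((k-2)/2)*(g s - g₀))^2 + ((1-k)/2)⁻¹*(-(s^(k/2)*(g' s)))^2 := h
      _ = ((1-k)/2)*(s^(k-2)*(g s - g₀)^2) + (2/(1-k))*(s^k*(g' s)^2) := by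
          rw [neg_sq, mul_pow, mul_pow, e1, e2, hinv]
  have hcross : ∫ s in ε..L, s^(k-1)*(2*(g s - g₀)*(g' s))
      ≤ ((1-k)/2)*(∫ s in ε..L, s^(k-2)*(g s - g₀)^2) + (2/(1-k))*(∫ s in ε..L, s^k*(g' s)^2) := by
    calc ∫ s in ε..L, s^(k-1)*(2*(g s - g₀)*(g' s))
        ≤ ∫ s in ε..L, (((1-k)/2)*(s^(k-2)*(g s - g₀)^2) + (2/(1-k))*(s^k*(g' s)^2)) :=
          intervalIntegral.integral_mono_on hεL.le hi2
            ((hi1.const_mul _).add (hi3.const_mul _)) hpt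
      _ = _ := by
          rw [intervalIntegral.integral_add (hi1.const_mul _) (hi3.const_mul _),
            intervalIntegral.integral_const_mul, intervalIntegral.integral_const_mul]
  have hBε : ∫ s in ε..L, s^k*(g' s)^2 ≤ Bt := by
    rw [intervalIntegral.integral_of_le hεL.le]
    exact setIntegral_mono_set hBi ((ae_restrict_iff' measurableSet_Ioc).2
      (Eventually.of_forall (fun s hs => mul_nonneg (Real.rpow_nonneg hs.1.le _) (sq_nonneg _))))
      (Ioc_subset_Ioc_left hε.le).eventuallyLE
  have hεbd : ε^(k-1)*(g ε - g₀)^2 ≤ Bt/(1-k) := by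
    have h1 := hptb ε ⟨hε, hεL.le⟩
    have h2 : (∫ s in Ioc (0:ℝ) ε, s^k*(g' s)^2) ≤ Bt :=
      setIntegral_mono_set hBi ((ae_restrict_iff' measurableSet_Ioc).2
        (Eventually.of_forall (fun s hs => mul_nonneg (Real.rpow_nonneg hs.1.le _) (sq_nonneg _))))
        (Ioc_subset_Ioc_right hεL.le).eventuallyLE
    have h3 : ε^(k-1)*(g ε - g₀)^2
        ≤ ε^(k-1)*((ε^(1-k)/(1-k)) * ∫ s in Ioc (0:ℝ) ε, s^k*(g' s)^2) :=
      mul_le_mul_of_nonneg_left h1 (Real.rpow_nonneg hε.le _)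
    have e : ε^(k-1)*ε^(1-k) = 1 := by
      rw [← Real.rpow_add hε]
      norm_num
    have e2 : ε^(k-1)*((ε^(1-k)/(1-k)) * ∫ s in Ioc (0:ℝ) ε, s^k*(g' s)^2)
        = (∫ s in Ioc (0:ℝ) ε, s^k*(g' s)^2)/(1-k) := by
      field_simp
      nlinarith [e]
    rw [e2] at h3
    calc ε^(k-1)*(g ε - g₀)^2 ≤ _ := h3
      _ ≤ Bt/(1-k) := (div_le_div_iff_of_pos_right hk1).mpr h2
  have hLnn : 0 ≤ L^(k-1)*(g L - g₀)^2 :=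
    mul_nonneg (Real.rpow_nonneg hL.le _) (sq_nonneg _)
  have key : ((1-k)/2) * (∫ s in ε..L, s^(k-2)*(g s - g₀)^2) ≤ (3/(1-k))*Bt := by
    rw [hsplit] at hibp
    have h4 : (2/(1-k))*(∫ s in ε..L, s^k*(g' s)^2) ≤ (2/(1-k))*Bt :=
      mul_le_mul_of_nonneg_left hBε (by positivity)
    have e5 : Bt/(1-k) + (2/(1-k))*Bt = (3/(1-k))*Bt := by ring
    linarith [hibp, hcross, hεbd, hLnn, h4]
  rw [intervalIntegral.integral_of_le hεL.le] at key
  have hfinal := mul_le_mul_of_nonneg_left key (by positivity : (0:ℝ) ≤ 2/(1-k))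
  have e6 : (2/(1-k))*(((1-k)/2) * (∫ s in Ioc ε L, s^(k-2)*(g s - g₀)^2))
      = ∫ s in Ioc ε L, s^(k-2)*(g s - g₀)^2 := by
    field_simp
  have e7 : (2/(1-k))*((3/(1-k))*Bt) = (6/(1-k)^2)*Bt := by
    field_simp
    ring
  rw [e6, e7] at hfinal
  exact hfinal


/-- Hardy's inequalities on (0, L], with a constant depending only on `k`
(independent of `L` and `ω`). -/
theorem hardy_inequalities (k : ℝ) :
    ∃ C > (0:ℝ), ∀ (L : ℝ), 0 < L → ∀ (g g' : ℝ → ℝ),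
      (∀ s ∈ Ioc (0:ℝ) L, HasDerivAt g (g' s) s) →
      ContinuousOn g' (Ioc (0:ℝ) L) →
      IntegrableOn (fun s => s ^ k * ((g s) ^ 2 / L ^ 2 + (g' s) ^ 2)) (Ioc (0:ℝ) L) →
      -- (a)
      ((1 < k →
        (∫ s in Ioc (0:ℝ) L, s ^ (k-2) * (g s) ^ 2)
          ≤ C * ∫ s in Ioc (0:ℝ) L, s ^ k * ((g s) ^ 2 / L ^ 2 + (g' s) ^ 2)) ∧
      -- (b)
      (k < 1 →
        ∃ g₀ : ℝ, Tendsto g (nhdsWithin 0 (Ioi 0)) (nhds g₀) ∧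
          (∫ s in Ioc (0:ℝ) L, s ^ (k-2) * (g s - g₀) ^ 2)
            ≤ C * ∫ s in Ioc (0:ℝ) L, s ^ k * (g' s) ^ 2) ∧
      -- (c)
      (1 < k → ∀ ω ∈ Ioo (0:ℝ) 1, ω ≤ L →
        IntegrableOn (fun s => s ^ (k-2) * (g' s) ^ 2) (Ioc (0:ℝ) ω) →
        (∫ s in Ioc (0:ℝ) ω, s ^ (k-2) * (g s) ^ 2)
          ≤ C / ω ^ 2 * (∫ s in Ioc (0:ℝ) ω, s ^ k * (g s) ^ 2)
            + C * ω ^ 2 * ∫ s in Ioc (0:ℝ) ω, s ^ (k-2) * (g' s) ^ 2)) := by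
  refine ⟨1 + (2/|k-1|)*(4*2^k + 2/|k-1|) + 6/(1-k)^2 + (4*2^k+2)/|k-1|, ?_, ?_⟩
  · have h1 : (0:ℝ) ≤ 2/|k-1| := by positivity
    have h2 : (0:ℝ) ≤ 4*2^k + 2/|k-1| := by positivity
    have h3 : (0:ℝ) ≤ 6/(1-k)^2 := by positivity
    have h4 : (0:ℝ) ≤ (4*2^k+2)/|k-1| := by positivity
    nlinarith [mul_nonneg h1 h2]
  intro L hL g g' hg hg' hfi
  have hgc : ContinuousOn g (Ioc (0:ℝ) L) := fun s hs =>
    ((hg s hs).continuousAt).continuousWithinAt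
  have hrp : ∀ p : ℝ, ContinuousOn (fun s : ℝ => s ^ p) (Ioc (0:ℝ) L) := fun p =>
    continuousOn_id.rpow_const (fun s hs => Or.inl hs.1.ne')
  have hBi : IntegrableOn (fun s => s^k * (g' s)^2) (Ioc (0:ℝ) L) := by
    apply integrableOn_of_le_of_contOn (f := fun s => s^k * (g' s)^2) measurableSet_Ioc hfi ((hrp k).mul (hg'.pow 2))
    intro s hs
    have h0 : (0:ℝ) ≤ s^k := Real.rpow_nonneg hs.1.le k
    rw [abs_of_nonneg (by positivity)]
    have e : s^k*((g s)^2/L^2 + (g' s)^2) = s^k*((g s)^2/L^2) + s^k*(g' s)^2 := by ring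
    rw [e]
    nlinarith [mul_nonneg h0 (div_nonneg (sq_nonneg (g s)) (sq_nonneg L))]
  have hGiL : IntegrableOn (fun s => s^k * (g s)^2) (Ioc (0:ℝ) L) := by
    apply integrableOn_of_le_of_contOn (f := fun s => s^k * (g s)^2) measurableSet_Ioc (hfi.const_mul (L^2))
      ((hrp k).mul (hgc.pow 2))
    intro s hs
    have h0 : (0:ℝ) ≤ s^k := Real.rpow_nonneg hs.1.le k
    rw [abs_of_nonneg (by positivity)]
    have e : L^2*(s^k*((g s)^2/L^2 + (g' s)^2)) = s^k*(g s)^2 + L^2*(s^k*(g' s)^2) := by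
      field_simp
    rw [e]
    nlinarith [mul_nonneg h0 (sq_nonneg (g' s)), sq_nonneg L]
  refine ⟨?_, ?_, ?_⟩
  · -- (a)
    intro hk
    have hk1 : (0:ℝ) < k-1 := by linarith
    have hR0 : 0 ≤ ∫ s in Ioc (0:ℝ) L, s^k*((g s)^2/L^2 + (g' s)^2) :=
      setIntegral_nonneg measurableSet_Ioc (fun s hs => by
        have h0 : (0:ℝ) ≤ s^k := Real.rpow_nonneg hs.1.le k
        positivity)
    have hCa : (2/(k-1))*(4*2^k + 2/(k-1))
        ≤ 1 + (2/|k-1|)*(4*2^k + 2/|k-1|) + 6/(1-k)^2 + (4*2^k+2)/|k-1| := by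
      rw [abs_of_pos hk1]
      have h3 : (0:ℝ) ≤ 6/(1-k)^2 := by positivity
      have h4 : (0:ℝ) ≤ (4*2^k+2)/(k-1) := div_nonneg (by positivity) hk1.le
      linarith
    exact (partA hk hL hg hg' hfi).trans (mul_le_mul_of_nonneg_right hCa hR0)
  · -- (b)
    intro hk
    obtain ⟨g₀, hg₀, hineq⟩ := partB hk hL hg hg' hBi
    refine ⟨g₀, hg₀, ?_⟩
    have hBt0 : 0 ≤ ∫ s in Ioc (0:ℝ) L, s^k*(g' s)^2 :=
      setIntegral_nonneg measurableSet_Ioc (fun s hs =>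
        mul_nonneg (Real.rpow_nonneg hs.1.le _) (sq_nonneg _))
    have hCb : 6/(1-k)^2
        ≤ 1 + (2/|k-1|)*(4*2^k + 2/|k-1|) + 6/(1-k)^2 + (4*2^k+2)/|k-1| := by
      have h1 : (0:ℝ) ≤ 2/|k-1| := by positivity
      have h2 : (0:ℝ) ≤ 4*2^k + 2/|k-1| := by positivity
      have h4 : (0:ℝ) ≤ (4*2^k+2)/|k-1| := by positivity
      nlinarith [mul_nonneg h1 h2]
    exact hineq.trans (mul_le_mul_of_nonneg_right hCb hBt0)
  · -- (c)
    intro hk ω hω hωL hBi2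
    have hk1 : (0:ℝ) < k-1 := by linarith
    have hωpos : (0:ℝ) < ω := hω.1
    have hGi : IntegrableOn (fun s => s^k*(g s)^2) (Ioc (0:ℝ) ω) :=
      hGiL.mono_set (Ioc_subset_Ioc_right hωL)
    have hc := partC hk hωpos hωL hg hg' hGi hBi2
    have hG0 : 0 ≤ ∫ s in Ioc (0:ℝ) ω, s^k*(g s)^2 :=
      setIntegral_nonneg measurableSet_Ioc (fun s hs =>
        mul_nonneg (Real.rpow_nonneg hs.1.le _) (sq_nonneg _))
    have hB0 : 0 ≤ ∫ s in Ioc (0:ℝ) ω, s^(k-2)*(g' s)^2 :=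
      setIntegral_nonneg measurableSet_Ioc (fun s hs =>
        mul_nonneg (Real.rpow_nonneg hs.1.le _) (sq_nonneg _))
    have hCc : (4*2^k+2)/(k-1)
        ≤ 1 + (2/|k-1|)*(4*2^k + 2/|k-1|) + 6/(1-k)^2 + (4*2^k+2)/|k-1| := by
      rw [abs_of_pos hk1]
      have h1 : (0:ℝ) ≤ 2/(k-1) := div_nonneg (by norm_num) hk1.le
      have h2 : (0:ℝ) ≤ 4*2^k + 2/(k-1) := by positivity
      have h3 : (0:ℝ) ≤ 6/(1-k)^2 := by positivity
      nlinarith [mul_nonneg h1 h2]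
    have hω2 : (0:ℝ) < ω^2 := by positivity
    have step1 : ((4*2^k+2)/(k-1))/ω^2 * (∫ s in Ioc (0:ℝ) ω, s^k*(g s)^2)
        ≤ (1 + (2/|k-1|)*(4*2^k + 2/|k-1|) + 6/(1-k)^2 + (4*2^k+2)/|k-1|)/ω^2
          * (∫ s in Ioc (0:ℝ) ω, s^k*(g s)^2) :=
      mul_le_mul_of_nonneg_right ((div_le_div_iff_of_pos_right hω2).mpr hCc) hG0
    have step2 : ((4*2^k+2)/(k-1))*ω^2 * (∫ s in Ioc (0:ℝ) ω, s^(k-2)*(g' s)^2)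
        ≤ (1 + (2/|k-1|)*(4*2^k + 2/|k-1|) + 6/(1-k)^2 + (4*2^k+2)/|k-1|)*ω^2
          * (∫ s in Ioc (0:ℝ) ω, s^(k-2)*(g' s)^2) :=
      mul_le_mul_of_nonneg_right (mul_le_mul_of_nonneg_right hCc (sq_nonneg ω)) hB0
    linarith [hc, step1, step2]

end FBCPE
end
end

section
/- Conservation of momentum for the conservative model: if (Z, v) is a regular enough strong solution of (FB-CPE) on [0, T], then the total momentum t ↦ ∫_Ω z^α Z(x_h, t)^{α+1} v(x, t) dx is constant in time; i.e., d/dt ∫_Ω z^α Z^{α+1} v dx = 0 on (0, T). -/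
/- Common framework for the free-boundary compressible primitive equations (FB-CPE)
   on Ω = 𝕋² × (0,1).  Fields are represented by functions of (t, x, y, z) (resp. (t, x, y)),
   periodic of period 1 in the horizontal variables x, y; the torus integrals are taken
   over the fundamental domain [0,1]². -/

noncomputable section

open Real MeasureTheory Filter Set intervalIntegral

namespace FBCPE

-- === helpers ===
def U4 (f : F) : ℝ × ℝ × ℝ × ℝ → ℝ := fun p => f p.1 p.2.1 p.2.2.1 p.2.2.2
def U3 (Z : G) : ℝ × ℝ × ℝ → ℝ := fun p => Z p.1 p.2.1 p.2.2
abbrev CD4 (f : F) : Prop := ContDiff ℝ (⊤ : ℕ∞) (U4 f)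
abbrev CD3 (Z : G) : Prop := ContDiff ℝ (⊤ : ℕ∞) (U3 Z)

lemma one_le_coe_top : (1 : WithTop ℕ∞) ≤ ((⊤ : ℕ∞) : WithTop ℕ∞) := by
  exact_mod_cast le_top

lemma top_add_one_le : ((⊤ : ℕ∞) : WithTop ℕ∞) + 1 ≤ ((⊤ : ℕ∞) : WithTop ℕ∞) := by
  exact_mod_cast le_top

section slices
variable {f : F} (hf : CD4 f)
include hf

lemma hasDerivAt_pt' (t x y z : ℝ) :
    HasDerivAt (fun s => f s x y z) (fderiv ℝ (U4 f) (t,x,y,z) (1,0,0,0)) t := by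
  have hline : HasDerivAt (fun s : ℝ => ((s, x, y, z) : ℝ × ℝ × ℝ × ℝ)) ((1,0,0,0) : ℝ × ℝ × ℝ × ℝ) t :=
    (hasDerivAt_id t).prodMk ((hasDerivAt_const t x).prodMk ((hasDerivAt_const t y).prodMk (hasDerivAt_const t z)))
  exact ((hf.differentiable (by simp)) (t,x,y,z)).hasFDerivAt.comp_hasDerivAt t hline

lemma hasDerivAt_px' (t x y z : ℝ) :
    HasDerivAt (fun s => f t s y z) (fderiv ℝ (U4 f) (t,x,y,z) (0,1,0,0)) x := by
  have hline : HasDerivAt (fun s : ℝ => ((t, s, y, z) : ℝ × ℝ × ℝ × ℝ)) ((0,1,0,0) : ℝ × ℝ × ℝ × ℝ) x :=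
    (hasDerivAt_const x t).prodMk ((hasDerivAt_id x).prodMk ((hasDerivAt_const x y).prodMk (hasDerivAt_const x z)))
  exact ((hf.differentiable (by simp)) (t,x,y,z)).hasFDerivAt.comp_hasDerivAt x hline

lemma hasDerivAt_py' (t x y z : ℝ) :
    HasDerivAt (fun s => f t x s z) (fderiv ℝ (U4 f) (t,x,y,z) (0,0,1,0)) y := by
  have hline : HasDerivAt (fun s : ℝ => ((t, x, s, z) : ℝ × ℝ × ℝ × ℝ)) ((0,0,1,0) : ℝ × ℝ × ℝ × ℝ) y :=
    (hasDerivAt_const y t).prodMk ((hasDerivAt_const y x).prodMk ((hasDerivAt_id y).prodMk (hasDerivAt_const y z)))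
  exact ((hf.differentiable (by simp)) (t,x,y,z)).hasFDerivAt.comp_hasDerivAt y hline

lemma hasDerivAt_pz' (t x y z : ℝ) :
    HasDerivAt (fun s => f t x y s) (fderiv ℝ (U4 f) (t,x,y,z) (0,0,0,1)) z := by
  have hline : HasDerivAt (fun s : ℝ => ((t, x, y, s) : ℝ × ℝ × ℝ × ℝ)) ((0,0,0,1) : ℝ × ℝ × ℝ × ℝ) z :=
    (hasDerivAt_const z t).prodMk ((hasDerivAt_const z x).prodMk ((hasDerivAt_const z y).prodMk (hasDerivAt_id z)))
  exact ((hf.differentiable (by simp)) (t,x,y,z)).hasFDerivAt.comp_hasDerivAt z hline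

lemma hasDerivAt_pt (t x y z : ℝ) : HasDerivAt (fun s => f s x y z) (pt f t x y z) t := by
  have h2 := hasDerivAt_pt' hf t x y z
  have h3 : pt f t x y z = fderiv ℝ (U4 f) (t,x,y,z) (1,0,0,0) := h2.deriv
  exact h3 ▸ h2

lemma hasDerivAt_px (t x y z : ℝ) : HasDerivAt (fun s => f t s y z) (px f t x y z) x := by
  have h2 := hasDerivAt_px' hf t x y z
  have h3 : px f t x y z = fderiv ℝ (U4 f) (t,x,y,z) (0,1,0,0) := h2.deriv
  exact h3 ▸ h2

lemma hasDerivAt_py (t x y z : ℝ) : HasDerivAt (fun s => f t x s z) (py f t x y z) y := by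
  have h2 := hasDerivAt_py' hf t x y z
  have h3 : py f t x y z = fderiv ℝ (U4 f) (t,x,y,z) (0,0,1,0) := h2.deriv
  exact h3 ▸ h2

lemma hasDerivAt_pz (t x y z : ℝ) : HasDerivAt (fun s => f t x y s) (pz f t x y z) z := by
  have h2 := hasDerivAt_pz' hf t x y z
  have h3 : pz f t x y z = fderiv ℝ (U4 f) (t,x,y,z) (0,0,0,1) := h2.deriv
  exact h3 ▸ h2

lemma contDiff_pt : CD4 (pt f) := by
  have h : U4 (pt f) = fun p : ℝ × ℝ × ℝ × ℝ => fderiv ℝ (U4 f) p ((1:ℝ),(0:ℝ),(0:ℝ),(0:ℝ)) := by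
    funext p
    exact (hasDerivAt_pt' hf p.1 p.2.1 p.2.2.1 p.2.2.2).deriv
  unfold CD4
  rw [h]
  exact (hf.fderiv_right top_add_one_le).clm_apply contDiff_const

lemma contDiff_px : CD4 (px f) := by
  have h : U4 (px f) = fun p : ℝ × ℝ × ℝ × ℝ => fderiv ℝ (U4 f) p ((0:ℝ),(1:ℝ),(0:ℝ),(0:ℝ)) := by
    funext p
    exact (hasDerivAt_px' hf p.1 p.2.1 p.2.2.1 p.2.2.2).deriv
  unfold CD4
  rw [h]
  exact (hf.fderiv_right top_add_one_le).clm_apply contDiff_const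

lemma contDiff_py : CD4 (py f) := by
  have h : U4 (py f) = fun p : ℝ × ℝ × ℝ × ℝ => fderiv ℝ (U4 f) p ((0:ℝ),(0:ℝ),(1:ℝ),(0:ℝ)) := by
    funext p
    exact (hasDerivAt_py' hf p.1 p.2.1 p.2.2.1 p.2.2.2).deriv
  unfold CD4
  rw [h]
  exact (hf.fderiv_right top_add_one_le).clm_apply contDiff_const

lemma contDiff_pz : CD4 (pz f) := by
  have h : U4 (pz f) = fun p : ℝ × ℝ × ℝ × ℝ => fderiv ℝ (U4 f) p ((0:ℝ),(0:ℝ),(0:ℝ),(1:ℝ)) := by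
    funext p
    exact (hasDerivAt_pz' hf p.1 p.2.1 p.2.2.1 p.2.2.2).deriv
  unfold CD4
  rw [h]
  exact (hf.fderiv_right top_add_one_le).clm_apply contDiff_const

end slices

section slices3
variable {Z : G} (hZ : CD3 Z)
include hZ

lemma hasDerivAt_qt' (t x y : ℝ) :
    HasDerivAt (fun s => Z s x y) (fderiv ℝ (U3 Z) (t,x,y) (1,0,0)) t := by
  have hline : HasDerivAt (fun s : ℝ => ((s, x, y) : ℝ × ℝ × ℝ)) ((1,0,0) : ℝ × ℝ × ℝ) t :=
    (hasDerivAt_id t).prodMk ((hasDerivAt_const t x).prodMk (hasDerivAt_const t y))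
  exact ((hZ.differentiable (by simp)) (t,x,y)).hasFDerivAt.comp_hasDerivAt t hline

lemma hasDerivAt_qx' (t x y : ℝ) :
    HasDerivAt (fun s => Z t s y) (fderiv ℝ (U3 Z) (t,x,y) (0,1,0)) x := by
  have hline : HasDerivAt (fun s : ℝ => ((t, s, y) : ℝ × ℝ × ℝ)) ((0,1,0) : ℝ × ℝ × ℝ) x :=
    (hasDerivAt_const x t).prodMk ((hasDerivAt_id x).prodMk (hasDerivAt_const x y))
  exact ((hZ.differentiable (by simp)) (t,x,y)).hasFDerivAt.comp_hasDerivAt x hline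

lemma hasDerivAt_qy' (t x y : ℝ) :
    HasDerivAt (fun s => Z t x s) (fderiv ℝ (U3 Z) (t,x,y) (0,0,1)) y := by
  have hline : HasDerivAt (fun s : ℝ => ((t, x, s) : ℝ × ℝ × ℝ)) ((0,0,1) : ℝ × ℝ × ℝ) y :=
    (hasDerivAt_const y t).prodMk ((hasDerivAt_const y x).prodMk (hasDerivAt_id y))
  exact ((hZ.differentiable (by simp)) (t,x,y)).hasFDerivAt.comp_hasDerivAt y hline

lemma hasDerivAt_qt (t x y : ℝ) : HasDerivAt (fun s => Z s x y) (qt Z t x y) t := by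
  have h2 := hasDerivAt_qt' hZ t x y
  have h3 : qt Z t x y = fderiv ℝ (U3 Z) (t,x,y) (1,0,0) := h2.deriv
  exact h3 ▸ h2

lemma hasDerivAt_qx (t x y : ℝ) : HasDerivAt (fun s => Z t s y) (qx Z t x y) x := by
  have h2 := hasDerivAt_qx' hZ t x y
  have h3 : qx Z t x y = fderiv ℝ (U3 Z) (t,x,y) (0,1,0) := h2.deriv
  exact h3 ▸ h2

lemma hasDerivAt_qy (t x y : ℝ) : HasDerivAt (fun s => Z t x s) (qy Z t x y) y := by
  have h2 := hasDerivAt_qy' hZ t x y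
  have h3 : qy Z t x y = fderiv ℝ (U3 Z) (t,x,y) (0,0,1) := h2.deriv
  exact h3 ▸ h2

lemma contDiff_qt : CD3 (qt Z) := by
  have h : U3 (qt Z) = fun p : ℝ × ℝ × ℝ => fderiv ℝ (U3 Z) p ((1:ℝ),(0:ℝ),(0:ℝ)) := by
    funext p
    exact (hasDerivAt_qt' hZ p.1 p.2.1 p.2.2).deriv
  unfold CD3
  rw [h]
  exact (hZ.fderiv_right top_add_one_le).clm_apply contDiff_const

lemma contDiff_qx : CD3 (qx Z) := by
  have h : U3 (qx Z) = fun p : ℝ × ℝ × ℝ => fderiv ℝ (U3 Z) p ((0:ℝ),(1:ℝ),(0:ℝ)) := by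
    funext p
    exact (hasDerivAt_qx' hZ p.1 p.2.1 p.2.2).deriv
  unfold CD3
  rw [h]
  exact (hZ.fderiv_right top_add_one_le).clm_apply contDiff_const

lemma contDiff_qy : CD3 (qy Z) := by
  have h : U3 (qy Z) = fun p : ℝ × ℝ × ℝ => fderiv ℝ (U3 Z) p ((0:ℝ),(0:ℝ),(1:ℝ)) := by
    funext p
    exact (hasDerivAt_qy' hZ p.1 p.2.1 p.2.2).deriv
  unfold CD3
  rw [h]
  exact (hZ.fderiv_right top_add_one_le).clm_apply contDiff_const

end slices3

-- === periodicity helpers ===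
lemma periodic_deriv {gg : ℝ → ℝ} (h : ∀ u, gg (u+1) = gg u) (x : ℝ) :
    deriv gg (x+1) = deriv gg x := by
  have h1 : (fun u => gg (u+1)) = gg := funext h
  have := deriv_comp_add_const gg 1 x
  rw [h1] at this
  exact this.symm

lemma periodic_of_fract {gg : ℝ → ℝ} (h : ∀ u, gg (u+1) = gg u) (x : ℝ) :
    gg x = gg (Int.fract x) := by
  have hper : Function.Periodic gg 1 := h
  have := hper.sub_int_mul_eq (x := x) (n := ⌊x⌋)
  rw [Int.fract]
  simp only [mul_one] at this
  exact this.symm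

-- === parametric integral lemmas ===
lemma contOn_param {X : Type} [TopologicalSpace X] [FirstCountableTopology X]
    {s : Set X} (hs : IsCompact s) {Fu : X → ℝ → ℝ}
    (hF : ContinuousOn (fun p : X × ℝ => Fu p.1 p.2) (s ×ˢ Icc (0:ℝ) 1)) :
    ContinuousOn (fun x => ∫ z in (0:ℝ)..1, Fu x z) s := by
  obtain ⟨C, hC⟩ := (hs.prod isCompact_Icc).exists_bound_of_continuousOn hF
  intro x₀ hx₀
  have hIoc : Set.uIoc (0:ℝ) 1 = Ioc 0 1 := uIoc_of_le (by norm_num)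
  apply continuousWithinAt_of_dominated_interval (bound := fun _ => C)
  · filter_upwards [self_mem_nhdsWithin] with x hx
    apply ContinuousOn.aestronglyMeasurable ?_ (by rw [hIoc]; exact measurableSet_Ioc)
    intro z hz
    rw [hIoc] at hz
    have h1 : ContinuousWithinAt (fun p : X × ℝ => Fu p.1 p.2) (s ×ˢ Icc (0:ℝ) 1) (x, z) :=
      hF (x, z) ⟨hx, Ioc_subset_Icc_self hz⟩
    have h2 : ContinuousWithinAt (fun w : ℝ => ((x, w) : X × ℝ)) (Set.uIoc (0:ℝ) 1) z :=
      (continuousWithinAt_const.prodMk continuousWithinAt_id)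
    exact ContinuousWithinAt.comp (g := fun p : X × ℝ => Fu p.1 p.2)
      (f := fun w : ℝ => ((x, w) : X × ℝ)) (t := s ×ˢ Icc (0:ℝ) 1) h1 h2
      (fun w hw => ⟨hx, Ioc_subset_Icc_self (hIoc ▸ hw)⟩)
  · filter_upwards [self_mem_nhdsWithin] with x hx
    filter_upwards with z
    intro hz
    rw [hIoc] at hz
    exact hC (x, z) ⟨hx, Ioc_subset_Icc_self hz⟩
  · exact intervalIntegrable_const
  · filter_upwards with z
    intro hz
    rw [hIoc] at hz
    have hzIcc : z ∈ Icc (0:ℝ) 1 := Ioc_subset_Icc_self hz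
    have h2 : ContinuousWithinAt (fun w : X => ((w, z) : X × ℝ)) s x₀ :=
      (continuousWithinAt_id.prodMk continuousWithinAt_const)
    exact ContinuousWithinAt.comp (g := fun p : X × ℝ => Fu p.1 p.2)
      (f := fun w : X => ((w, z) : X × ℝ)) (t := s ×ˢ Icc (0:ℝ) 1)
      (hF (x₀, z) ⟨hx₀, hzIcc⟩) h2 (fun w hw => ⟨hw, hzIcc⟩)

lemma param_hasDerivAt (Fu Fu' : ℝ → ℝ → ℝ) {t₀ ε : ℝ} (hε : 0 < ε)
    (hF : ContinuousOn (fun p : ℝ × ℝ => Fu p.1 p.2) (Metric.closedBall t₀ ε ×ˢ Icc (0:ℝ) 1))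
    (hF' : ContinuousOn (fun p : ℝ × ℝ => Fu' p.1 p.2) (Metric.closedBall t₀ ε ×ˢ Icc (0:ℝ) 1))
    (hd : ∀ t ∈ Metric.ball t₀ ε, ∀ x ∈ Icc (0:ℝ) 1, HasDerivAt (fun u => Fu u x) (Fu' t x) t) :
    HasDerivAt (fun u => ∫ x in (0:ℝ)..1, Fu u x) (∫ x in (0:ℝ)..1, Fu' t₀ x) t₀ := by
  obtain ⟨C, hC⟩ := ((isCompact_closedBall t₀ ε).prod isCompact_Icc).exists_bound_of_continuousOn hF'
  have hIoc : Set.uIoc (0:ℝ) 1 = Ioc 0 1 := uIoc_of_le (by norm_num)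
  have hmeas : ∀ t ∈ Metric.closedBall t₀ ε, AEStronglyMeasurable (Fu t) (volume.restrict (Set.uIoc (0:ℝ) 1)) := by
    intro t ht
    apply ContinuousOn.aestronglyMeasurable ?_ (by rw [hIoc]; exact measurableSet_Ioc)
    intro z hz
    have hzIcc : z ∈ Icc (0:ℝ) 1 := Ioc_subset_Icc_self (hIoc ▸ hz)
    have h2 : ContinuousWithinAt (fun w : ℝ => ((t, w) : ℝ × ℝ)) (Set.uIoc (0:ℝ) 1) z :=
      (continuousWithinAt_const.prodMk continuousWithinAt_id)
    exact ContinuousWithinAt.comp (g := fun p : ℝ × ℝ => Fu p.1 p.2)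
      (f := fun w : ℝ => ((t, w) : ℝ × ℝ)) (t := Metric.closedBall t₀ ε ×ˢ Icc (0:ℝ) 1)
      (hF (t, z) ⟨ht, hzIcc⟩) h2
      (fun w hw => ⟨ht, Ioc_subset_Icc_self (hIoc ▸ hw)⟩)
  have hmeas' : AEStronglyMeasurable (Fu' t₀) (volume.restrict (Set.uIoc (0:ℝ) 1)) := by
    apply ContinuousOn.aestronglyMeasurable ?_ (by rw [hIoc]; exact measurableSet_Ioc)
    intro z hz
    have hzIcc : z ∈ Icc (0:ℝ) 1 := Ioc_subset_Icc_self (hIoc ▸ hz)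
    have h2 : ContinuousWithinAt (fun w : ℝ => ((t₀, w) : ℝ × ℝ)) (Set.uIoc (0:ℝ) 1) z :=
      (continuousWithinAt_const.prodMk continuousWithinAt_id)
    exact ContinuousWithinAt.comp (g := fun p : ℝ × ℝ => Fu' p.1 p.2)
      (f := fun w : ℝ => ((t₀, w) : ℝ × ℝ)) (t := Metric.closedBall t₀ ε ×ˢ Icc (0:ℝ) 1)
      (hF' (t₀, z) ⟨Metric.mem_closedBall_self hε.le, hzIcc⟩) h2
      (fun w hw => ⟨Metric.mem_closedBall_self hε.le, Ioc_subset_Icc_self (hIoc ▸ hw)⟩)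
  have hFint : IntervalIntegrable (Fu t₀) volume 0 1 := by
    apply ContinuousOn.intervalIntegrable
    intro z hz
    have hzIcc : z ∈ Icc (0:ℝ) 1 := by rwa [uIcc_of_le (by norm_num : (0:ℝ) ≤ 1)] at hz
    have h2 : ContinuousWithinAt (fun w : ℝ => ((t₀, w) : ℝ × ℝ)) (uIcc (0:ℝ) 1) z :=
      (continuousWithinAt_const.prodMk continuousWithinAt_id)
    exact ContinuousWithinAt.comp (g := fun p : ℝ × ℝ => Fu p.1 p.2)
      (f := fun w : ℝ => ((t₀, w) : ℝ × ℝ)) (t := Metric.closedBall t₀ ε ×ˢ Icc (0:ℝ) 1)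
      (hF (t₀, z) ⟨Metric.mem_closedBall_self hε.le, hzIcc⟩) h2
      (fun w hw => ⟨Metric.mem_closedBall_self hε.le, by
        rwa [uIcc_of_le (by norm_num : (0:ℝ) ≤ 1)] at hw⟩)
  refine (intervalIntegral.hasDerivAt_integral_of_dominated_loc_of_deriv_le (Metric.ball_mem_nhds t₀ hε)
    ?_ hFint hmeas' ?_ (_root_.intervalIntegrable_const (c := C)) ?_).2
  · filter_upwards [Metric.closedBall_mem_nhds t₀ hε] with t ht
    exact hmeas t ht
  · filter_upwards with z hz t ht
    exact hC (t, z) ⟨Metric.ball_subset_closedBall ht, Ioc_subset_Icc_self (hIoc ▸ hz)⟩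
  · filter_upwards with z hz t ht
    exact hd t ht z (Ioc_subset_Icc_self (hIoc ▸ hz))

lemma contOn_comp4 {X : Type} [TopologicalSpace X] {gg : F} {B : Set (ℝ × ℝ × ℝ × ℝ)}
    (hgg : ContinuousOn (U4 gg) B) {s : Set X} (m : X → ℝ × ℝ × ℝ × ℝ) (hm : Continuous m)
    (hmap : ∀ p ∈ s, m p ∈ B) :
    ContinuousOn (fun p => gg (m p).1 (m p).2.1 (m p).2.2.1 (m p).2.2.2) s :=
  fun p hp => ContinuousWithinAt.comp (g := U4 gg) (f := m) (t := B)
    (hgg (m p) (hmap p hp)) hm.continuousWithinAt hmap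

lemma triple_hasDerivAt (f f' : F) {t₀ ε : ℝ} (hε : 0 < ε)
    (hf : ContinuousOn (U4 f)
      (Metric.closedBall t₀ ε ×ˢ Icc (0:ℝ) 1 ×ˢ Icc (0:ℝ) 1 ×ˢ Icc (0:ℝ) 1))
    (hf' : ContinuousOn (U4 f')
      (Metric.closedBall t₀ ε ×ˢ Icc (0:ℝ) 1 ×ˢ Icc (0:ℝ) 1 ×ˢ Icc (0:ℝ) 1))
    (hd : ∀ t ∈ Metric.ball t₀ ε, ∀ x ∈ Icc (0:ℝ) 1, ∀ y ∈ Icc (0:ℝ) 1, ∀ z ∈ Icc (0:ℝ) 1,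
      HasDerivAt (fun u => f u x y z) (f' t x y z) t) :
    HasDerivAt (fun u => ∫ x in (0:ℝ)..1, ∫ y in (0:ℝ)..1, ∫ z in (0:ℝ)..1, f u x y z)
      (∫ x in (0:ℝ)..1, ∫ y in (0:ℝ)..1, ∫ z in (0:ℝ)..1, f' t₀ x y z) t₀ := by
  have hdouble : ∀ (gg : F), ContinuousOn (U4 gg)
      (Metric.closedBall t₀ ε ×ˢ Icc (0:ℝ) 1 ×ˢ Icc (0:ℝ) 1 ×ˢ Icc (0:ℝ) 1) →
      ∀ (c r : ℝ), 0 < r → Metric.closedBall c r ⊆ Metric.closedBall t₀ ε →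
      ContinuousOn (fun p : ℝ × ℝ => ∫ y in (0:ℝ)..1, ∫ z in (0:ℝ)..1, gg p.1 p.2 y z)
        (Metric.closedBall c r ×ˢ Icc (0:ℝ) 1) := by
    intro gg hgg c r _ hsub
    apply contOn_param ((isCompact_closedBall c r).prod isCompact_Icc)
    apply contOn_param (((isCompact_closedBall c r).prod isCompact_Icc).prod isCompact_Icc)
    exact contOn_comp4 hgg (fun q : ((ℝ × ℝ) × ℝ) × ℝ => (q.1.1.1, q.1.1.2, q.1.2, q.2))
      (by fun_prop) (fun q hq => ⟨hsub hq.1.1.1, hq.1.1.2, hq.1.2, hq.2⟩)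
  have hsingle : ∀ (gg : F), ContinuousOn (U4 gg)
      (Metric.closedBall t₀ ε ×ˢ Icc (0:ℝ) 1 ×ˢ Icc (0:ℝ) 1 ×ˢ Icc (0:ℝ) 1) →
      ∀ (xx : ℝ), xx ∈ Icc (0:ℝ) 1 → ∀ (c r : ℝ), 0 < r →
      Metric.closedBall c r ⊆ Metric.closedBall t₀ ε →
      ContinuousOn (fun p : ℝ × ℝ => ∫ z in (0:ℝ)..1, gg p.1 xx p.2 z)
        (Metric.closedBall c r ×ˢ Icc (0:ℝ) 1) := by
    intro gg hgg xx hxx c r _ hsub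
    apply contOn_param ((isCompact_closedBall c r).prod isCompact_Icc)
    exact contOn_comp4 hgg (fun q : (ℝ × ℝ) × ℝ => (q.1.1, xx, q.1.2, q.2))
      (by fun_prop) (fun q hq => ⟨hsub hq.1.1, hxx, hq.1.2, hq.2⟩)
  have hpoint : ∀ (gg : F), ContinuousOn (U4 gg)
      (Metric.closedBall t₀ ε ×ˢ Icc (0:ℝ) 1 ×ˢ Icc (0:ℝ) 1 ×ˢ Icc (0:ℝ) 1) →
      ∀ (xx : ℝ), xx ∈ Icc (0:ℝ) 1 → ∀ (yy : ℝ), yy ∈ Icc (0:ℝ) 1 → ∀ (c r : ℝ), 0 < r →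
      Metric.closedBall c r ⊆ Metric.closedBall t₀ ε →
      ContinuousOn (fun p : ℝ × ℝ => gg p.1 xx yy p.2)
        (Metric.closedBall c r ×ˢ Icc (0:ℝ) 1) := by
    intro gg hgg xx hxx yy hyy c r _ hsub
    exact contOn_comp4 hgg (fun q : ℝ × ℝ => (q.1, xx, yy, q.2))
      (by fun_prop) (fun q hq => ⟨hsub hq.1, hxx, hyy, hq.2⟩)
  apply param_hasDerivAt (Fu := fun u x => ∫ y in (0:ℝ)..1, ∫ z in (0:ℝ)..1, f u x y z)
    (Fu' := fun u x => ∫ y in (0:ℝ)..1, ∫ z in (0:ℝ)..1, f' u x y z) hε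
    (hdouble f hf t₀ ε hε (subset_refl _)) (hdouble f' hf' t₀ ε hε (subset_refl _))
  intro t ht x hx
  have hε1 : 0 < ε - dist t t₀ := by simp [Metric.mem_ball] at ht; linarith
  have hsub1 : Metric.closedBall t (ε - dist t t₀) ⊆ Metric.closedBall t₀ ε :=
    Metric.closedBall_subset_closedBall' (by linarith)
  apply param_hasDerivAt (Fu := fun u y => ∫ z in (0:ℝ)..1, f u x y z)
    (Fu' := fun u y => ∫ z in (0:ℝ)..1, f' u x y z) hε1
    (hsingle f hf x hx t _ hε1 hsub1) (hsingle f' hf' x hx t _ hε1 hsub1)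
  intro u hu y hy
  have hu0 : dist u t₀ < ε := by
    simp [Metric.mem_ball] at hu ht
    calc dist u t₀ ≤ dist u t + dist t t₀ := dist_triangle _ _ _
      _ < (ε - dist t t₀) + dist t t₀ := by linarith
      _ = ε := by ring
  have hε2 : 0 < ε - dist u t₀ := by linarith
  have hsub2 : Metric.closedBall u (ε - dist u t₀) ⊆ Metric.closedBall t₀ ε :=
    Metric.closedBall_subset_closedBall' (by linarith)
  apply param_hasDerivAt (Fu := fun w z => f w x y z) (Fu' := fun w z => f' w x y z) hε2
    (hpoint f hf x hx y hy u _ hε2 hsub2) (hpoint f' hf' x hx y hy u _ hε2 hsub2)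
  intro w hw z hz
  have hw0 : dist w t₀ < ε := by
    simp [Metric.mem_ball] at hw ⊢
    calc dist w t₀ ≤ dist w u + dist u t₀ := dist_triangle _ _ _
      _ < (ε - dist u t₀) + dist u t₀ := by linarith
      _ = ε := by ring
  exact hd w (Metric.mem_ball.2 hw0) x hx y hy z hz

-- === flux functions ===
def EE (α : ℝ) (Z : G) (v : F) : F := fun t x y z =>
  z ^ α * ((α+1) * Z t x y ^ α * qt Z t x y * v t x y z + Z t x y ^ (α+1) * pt v t x y z)

def Phi (α g μ lam a : ℝ) (Z : G) (v1 v2 v : F) : F := fun t x y z =>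
  μ * Z t x y * px v t x y z + a * (μ+lam) * (Z t x y * (px v1 t x y z + py v2 t x y z))
  - z ^ α * Z t x y ^ (α+1) * v1 t x y z * v t x y z
  - a * (g/(α+2)) * z ^ α * Z t x y ^ (α+2)

def DPhi (α g μ lam a : ℝ) (Z : G) (v1 v2 v : F) : F := fun t x y z =>
  μ * (qx Z t x y * px v t x y z + Z t x y * px (px v) t x y z)
  + a * (μ+lam) * (qx Z t x y * (px v1 t x y z + py v2 t x y z)
      + Z t x y * (px (px v1) t x y z + px (py v2) t x y z))
  - ((α+1) * z ^ α * Z t x y ^ α * qx Z t x y * v1 t x y z * v t x y z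
      + z ^ α * Z t x y ^ (α+1) * (px v1 t x y z * v t x y z + v1 t x y z * px v t x y z))
  - a * (g/(α+2)) * z ^ α * ((α+2) * Z t x y ^ (α+1) * qx Z t x y)

def Psi (α g μ lam b : ℝ) (Z : G) (v1 v2 v : F) : F := fun t x y z =>
  μ * Z t x y * py v t x y z + b * (μ+lam) * (Z t x y * (px v1 t x y z + py v2 t x y z))
  - z ^ α * Z t x y ^ (α+1) * v2 t x y z * v t x y z
  - b * (g/(α+2)) * z ^ α * Z t x y ^ (α+2)

def DPsi (α g μ lam b : ℝ) (Z : G) (v1 v2 v : F) : F := fun t x y z =>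
  μ * (qy Z t x y * py v t x y z + Z t x y * py (py v) t x y z)
  + b * (μ+lam) * (qy Z t x y * (px v1 t x y z + py v2 t x y z)
      + Z t x y * (py (px v1) t x y z + py (py v2) t x y z))
  - ((α+1) * z ^ α * Z t x y ^ α * qy Z t x y * v2 t x y z * v t x y z
      + z ^ α * Z t x y ^ (α+1) * (py v2 t x y z * v t x y z + v2 t x y z * py v t x y z))
  - b * (g/(α+2)) * z ^ α * ((α+2) * Z t x y ^ (α+1) * qy Z t x y)

def Theta (α : ℝ) (Z : G) (v1 v2 : F) : F := fun t x y z =>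
  Z t x y ^ α *
    (z ^ (α + 1) * ((α + 1) * (avg α v1 t x y * qx Z t x y + avg α v2 t x y * qy Z t x y)
        + avg α (divh v1 v2) t x y * Z t x y)
      - (α + 1) * (cum α v1 t x y z * qx Z t x y + cum α v2 t x y z * qy Z t x y)
      - cum α (divh v1 v2) t x y z * Z t x y)

def ThFlux (α μ : ℝ) (Z : G) (v1 v2 v : F) : F := fun t x y z =>
  μ * Z t x y * pz v t x y z - Theta α Z v1 v2 t x y z * v t x y z

def DTh (α μ : ℝ) (Z : G) (v1 v2 v : F) : F := fun t x y z =>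
  μ * Z t x y * pz (pz v) t x y z
  - Z t x y ^ α *
      ((α + 1) * z ^ α * ((α + 1) * (avg α v1 t x y * qx Z t x y + avg α v2 t x y * qy Z t x y)
          + avg α (divh v1 v2) t x y * Z t x y)
        - (α + 1) * (z ^ α * v1 t x y z * qx Z t x y + z ^ α * v2 t x y z * qy Z t x y)
        - z ^ α * divh v1 v2 t x y z * Z t x y) * v t x y z
  - Theta α Z v1 v2 t x y z * pz v t x y z

section component
variable {α g μ lam a b : ℝ} {Z : G} {v1 v2 v : F}
variable (hα : 0 < α) (hZ : CD3 Z) (hv1 : CD4 v1) (hv2 : CD4 v2) (hv : CD4 v)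

lemma cont_slice_z {f : F} (hf : CD4 f) (t x y : ℝ) : Continuous fun ξ : ℝ => f t x y ξ := by
  have h : Continuous fun ξ : ℝ => U4 f (t,x,y,ξ) := hf.continuous.comp (by fun_prop)
  exact h

lemma cont_rpow_base (hα' : 0 ≤ α) : Continuous fun z : ℝ => z ^ α :=
  continuous_iff_continuousAt.2 fun z => Real.continuousAt_rpow_const z α (Or.inr hα')

include hα hZ hv1 hv2 hv in
lemma hasDerivAt_Phi (t x y z : ℝ) (hZpos : 0 < Z t x y) :
    HasDerivAt (fun s => Phi α g μ lam a Z v1 v2 v t s y z)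
      (DPhi α g μ lam a Z v1 v2 v t x y z) x := by
  have hne : Z t x y ≠ 0 := ne_of_gt hZpos
  have e1 : α + 1 - 1 = α := by ring
  have e2 : α + 2 - 1 = α + 1 := by ring
  have hZx := hasDerivAt_qx hZ t x y
  have hp1 := hZx.rpow_const (p := α+1) (Or.inl hne)
  rw [e1] at hp1
  have hp2 := hZx.rpow_const (p := α+2) (Or.inl hne)
  rw [e2] at hp2
  have hsv := hasDerivAt_px hv t x y z
  have hsv1 := hasDerivAt_px hv1 t x y z
  have hpxv := hasDerivAt_px (contDiff_px hv) t x y z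
  have hpxv1 := hasDerivAt_px (contDiff_px hv1) t x y z
  have hpyv2 := hasDerivAt_px (contDiff_py hv2) t x y z
  have H := ((((hZx.const_mul μ).mul hpxv).add
      ((hZx.mul (hpxv1.add hpyv2)).const_mul (a*(μ+lam)))).sub
      ((((hp1.const_mul (z ^ α)).mul hsv1).mul hsv))).sub
      (hp2.const_mul (a * (g/(α+2)) * z ^ α))
  refine H.congr_deriv ?_
  simp only [DPhi, Pi.add_apply, Pi.mul_apply, Pi.sub_apply]
  ring

include hα hZ hv1 hv2 hv in
lemma hasDerivAt_Psi (t x y z : ℝ) (hZpos : 0 < Z t x y) :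
    HasDerivAt (fun s => Psi α g μ lam b Z v1 v2 v t x s z)
      (DPsi α g μ lam b Z v1 v2 v t x y z) y := by
  have hne : Z t x y ≠ 0 := ne_of_gt hZpos
  have e1 : α + 1 - 1 = α := by ring
  have e2 : α + 2 - 1 = α + 1 := by ring
  have hZy := hasDerivAt_qy hZ t x y
  have hp1 := hZy.rpow_const (p := α+1) (Or.inl hne)
  rw [e1] at hp1
  have hp2 := hZy.rpow_const (p := α+2) (Or.inl hne)
  rw [e2] at hp2
  have hsv := hasDerivAt_py hv t x y z
  have hsv2 := hasDerivAt_py hv2 t x y z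
  have hpyv := hasDerivAt_py (contDiff_py hv) t x y z
  have hpxv1 := hasDerivAt_py (contDiff_px hv1) t x y z
  have hpyv2 := hasDerivAt_py (contDiff_py hv2) t x y z
  have H := ((((hZy.const_mul μ).mul hpyv).add
      ((hZy.mul (hpxv1.add hpyv2)).const_mul (b*(μ+lam)))).sub
      ((((hp1.const_mul (z ^ α)).mul hsv2).mul hsv))).sub
      (hp2.const_mul (b * (g/(α+2)) * z ^ α))
  refine H.congr_deriv ?_
  simp only [DPsi, Pi.add_apply, Pi.mul_apply, Pi.sub_apply]
  ring

include hα hZ hv1 hv2 hv in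
lemma hasDerivAt_ThFlux (t x y z : ℝ) :
    HasDerivAt (fun w => ThFlux α μ Z v1 v2 v t x y w)
      (DTh α μ Z v1 v2 v t x y z) z := by
  have e1 : α + 1 - 1 = α := by ring
  have hz1 : HasDerivAt (fun w : ℝ => w ^ (α+1)) ((α+1) * z ^ α) z := by
    have h := Real.hasDerivAt_rpow_const (x := z) (p := α+1) (Or.inr (by linarith))
    rwa [e1] at h
  have hcont1 : Continuous fun ξ : ℝ => ξ ^ α * v1 t x y ξ :=
    (cont_rpow_base hα.le).mul (cont_slice_z hv1 t x y)
  have hcont2 : Continuous fun ξ : ℝ => ξ ^ α * v2 t x y ξ :=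
    (cont_rpow_base hα.le).mul (cont_slice_z hv2 t x y)
  have hcd : CD4 (divh v1 v2) := (contDiff_px hv1).add (contDiff_py hv2)
  have hcontd : Continuous fun ξ : ℝ => ξ ^ α * divh v1 v2 t x y ξ :=
    (cont_rpow_base hα.le).mul (cont_slice_z hcd t x y)
  have hcum1 : HasDerivAt (fun w => cum α v1 t x y w) (z ^ α * v1 t x y z) z :=
    (hcont1.integral_hasStrictDerivAt 0 z).hasDerivAt
  have hcum2 : HasDerivAt (fun w => cum α v2 t x y w) (z ^ α * v2 t x y z) z :=
    (hcont2.integral_hasStrictDerivAt 0 z).hasDerivAt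
  have hcumd : HasDerivAt (fun w => cum α (divh v1 v2) t x y w)
      (z ^ α * divh v1 v2 t x y z) z :=
    (hcontd.integral_hasStrictDerivAt 0 z).hasDerivAt
  have hvz := hasDerivAt_pz hv t x y z
  have hpzv := hasDerivAt_pz (contDiff_pz hv) t x y z
  have hTheta := (((hz1.mul_const ((α + 1) * (avg α v1 t x y * qx Z t x y + avg α v2 t x y * qy Z t x y) + avg α (divh v1 v2) t x y * Z t x y)).sub
      (((hcum1.mul_const (qx Z t x y)).add (hcum2.mul_const (qy Z t x y))).const_mul (α+1))).sub
      (hcumd.mul_const (Z t x y))).const_mul (Z t x y ^ α)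
  have H := (hpzv.const_mul (μ * Z t x y)).sub (hTheta.mul hvz)
  refine H.congr_deriv ?_
  simp only [DTh, Theta, Pi.add_apply, Pi.mul_apply, Pi.sub_apply]
  ring

include hα hZ hv1 hv2 hv in
lemma ThFlux_zero (t x y : ℝ) (hbc0 : pz v t x y 0 = 0) :
    ThFlux α μ Z v1 v2 v t x y 0 = 0 := by
  simp only [ThFlux, Theta, cum, hbc0, intervalIntegral.integral_same,
    Real.zero_rpow (by linarith : α + 1 ≠ 0)]
  ring

include hα hZ hv1 hv2 hv in
lemma ThFlux_one (t x y : ℝ) (hbc1 : pz v t x y 1 = 0) :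
    ThFlux α μ Z v1 v2 v t x y 1 = 0 := by
  have hc : ∀ f : F, cum α f t x y 1 = avg α f t x y := fun f => rfl
  simp only [ThFlux, Theta, hbc1, hc, Real.one_rpow]
  ring

include hα hZ hv1 hv2 hv in
lemma pointwise_identity {W : F} (t x y z : ℝ) (hZpos : 0 < Z t x y)
    (hmass : massEq α Z v1 v2 t x y)
    (hweq : WEq α Z v1 v2 W t x y z)
    (heq : z ^ α * Z t x y ^ α * (pt v t x y z + v1 t x y z * px v t x y z
        + v2 t x y z * py v t x y z + W t x y z * pz v t x y z
        + g * (a * qx Z t x y + b * qy Z t x y)) * Z t x y =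
      (μ * (px (px v) t x y z + py (py v) t x y z)
        + (μ+lam) * (a * (px (px v1) t x y z + px (py v2) t x y z)
            + b * (py (px v1) t x y z + py (py v2) t x y z))
        + μ * pz (pz v) t x y z) * Z t x y
      + μ * (qx Z t x y * px v t x y z + qy Z t x y * py v t x y z)
      + (μ+lam) * (px v1 t x y z + py v2 t x y z) * (a * qx Z t x y + b * qy Z t x y)) :
    EE α Z v t x y z = DPhi α g μ lam a Z v1 v2 v t x y z
      + DPsi α g μ lam b Z v1 v2 v t x y z + DTh α μ Z v1 v2 v t x y z := by
  have hne : Z t x y ≠ 0 := ne_of_gt hZpos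
  have hZ1 : Z t x y ^ (α+1) = Z t x y ^ α * Z t x y := Real.rpow_add_one hne α
  unfold massEq at hmass
  unfold WEq at hweq
  have hqt : qt Z t x y = -((α + 1) * (avg α v1 t x y * qx Z t x y
      + avg α v2 t x y * qy Z t x y) + avg α (divh v1 v2) t x y * Z t x y) := by linarith
  simp only [EE, DPhi, DPsi, DTh, Theta]
  rw [← hweq, hqt]
  have hdv : ∀ z' : ℝ, divh v1 v2 t x y z' = px v1 t x y z' + py v2 t x y z' :=
    fun _ => rfl
  simp only [hZ1, hdv]
  have h2 : α + 2 ≠ 0 := by linarith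
  linear_combination (norm := (field_simp [h2]; ring)) heq

end component

-- periodicity of derivatives
lemma per_px_x {f : F} (h : ∀ t x y z, f t (x+1) y z = f t x y z) (t x y z : ℝ) :
    px f t (x+1) y z = px f t x y z := periodic_deriv (fun u => h t u y z) x
lemma per_py_y {f : F} (h : ∀ t x y z, f t x (y+1) z = f t x y z) (t x y z : ℝ) :
    py f t x (y+1) z = py f t x y z := periodic_deriv (fun u => h t x u z) y
lemma per_px_y {f : F} (h : ∀ t x y z, f t x (y+1) z = f t x y z) (t x y z : ℝ) :
    px f t x (y+1) z = px f t x y z := by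
  simp only [px]; congr 1; funext s; exact h t s y z
lemma per_py_x {f : F} (h : ∀ t x y z, f t (x+1) y z = f t x y z) (t x y z : ℝ) :
    py f t (x+1) y z = py f t x y z := by
  simp only [py]; congr 1; funext s; exact h t x s z

section component
variable {α g μ lam a b : ℝ} {Z : G} {v1 v2 v : F}
variable (hα : 0 < α) (hZ : CD3 Z) (hv1 : CD4 v1) (hv2 : CD4 v2) (hv : CD4 v)

include hα hZ hv1 hv2 hv in
lemma component {T : ℝ} {W : F} (hT : 0 ≤ T)
    (hperZx : ∀ t x y, Z t (x+1) y = Z t x y) (hperZy : ∀ t x y, Z t x (y+1) = Z t x y)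
    (hperv1x : ∀ t x y z, v1 t (x+1) y z = v1 t x y z)
    (hperv1y : ∀ t x y z, v1 t x (y+1) z = v1 t x y z)
    (hperv2x : ∀ t x y z, v2 t (x+1) y z = v2 t x y z)
    (hperv2y : ∀ t x y z, v2 t x (y+1) z = v2 t x y z)
    (hpervx : ∀ t x y z, v t (x+1) y z = v t x y z)
    (hpervy : ∀ t x y z, v t x (y+1) z = v t x y z)
    (hZpos : ∀ t ∈ Icc 0 T, ∀ x y : ℝ, 0 < Z t x y)
    (heqn : ∀ t ∈ Icc 0 T, ∀ x y : ℝ, ∀ z ∈ Icc (0:ℝ) 1,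
      z ^ α * Z t x y ^ α * (pt v t x y z + v1 t x y z * px v t x y z
        + v2 t x y z * py v t x y z + W t x y z * pz v t x y z
        + g * (a * qx Z t x y + b * qy Z t x y)) * Z t x y =
      (μ * (px (px v) t x y z + py (py v) t x y z)
        + (μ+lam) * (a * (px (px v1) t x y z + px (py v2) t x y z)
            + b * (py (px v1) t x y z + py (py v2) t x y z))
        + μ * pz (pz v) t x y z) * Z t x y
      + μ * (qx Z t x y * px v t x y z + qy Z t x y * py v t x y z)
      + (μ+lam) * (px v1 t x y z + py v2 t x y z) * (a * qx Z t x y + b * qy Z t x y))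
    (hmass : ∀ t ∈ Icc 0 T, ∀ x y : ℝ, massEq α Z v1 v2 t x y)
    (hweq : ∀ t ∈ Icc 0 T, ∀ x y : ℝ, ∀ z ∈ Icc (0:ℝ) 1, WEq α Z v1 v2 W t x y z)
    (hbc0 : ∀ t ∈ Icc 0 T, ∀ x y : ℝ, pz v t x y 0 = 0)
    (hbc1 : ∀ t ∈ Icc 0 T, ∀ x y : ℝ, pz v t x y 1 = 0) :
    ∀ t₀ ∈ Icc (0:ℝ) T,
      HasDerivAt (fun s => I3 fun x y z => z ^ α * Z s x y ^ (α+1) * v s x y z) 0 t₀ := by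
  classical
  -- positivity margin
  obtain ⟨δ₀, hδ₀, hthick⟩ :=
    ((isCompact_Icc (a := (0:ℝ)) (b := T)).prod
      ((isCompact_Icc (a := (0:ℝ)) (b := 1)).prod (isCompact_Icc (a := (0:ℝ)) (b := 1)))).exists_thickening_subset_open
      (isOpen_lt continuous_const hZ.continuous)
      (fun p hp => hZpos p.1 hp.1 p.2.1 p.2.2)
  set δ := δ₀/2 with hδdef
  have hδ : 0 < δ := by positivity
  have hZP : ∀ s ∈ Icc (-δ) (T+δ), ∀ x y : ℝ, 0 < Z s x y := by
    intro s hs x y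
    have hx1 : Z s x y = Z s (Int.fract x) y := periodic_of_fract (gg := fun u => Z s u y) (fun u => hperZx s u y) x
    have hy1 : Z s (Int.fract x) y = Z s (Int.fract x) (Int.fract y) :=
      periodic_of_fract (gg := fun u => Z s (Int.fract x) u) (fun u => hperZy s (Int.fract x) u) y
    set s' := min (max s 0) T with hs'def
    have hs'mem : s' ∈ Icc (0:ℝ) T := ⟨le_min (le_max_right s 0) hT, min_le_right _ _⟩
    have hds : dist s s' ≤ δ := by
      rcases le_total s 0 with h0 | h0
      · have h1 : s' = 0 := by rw [hs'def, max_eq_right h0, min_eq_left hT]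
        rw [Real.dist_eq, h1, sub_zero, abs_of_nonpos h0]
        linarith [hs.1]
      · have hmax : max s 0 = s := max_eq_left h0
        rcases le_total s T with h1 | h1
        · have h2 : s' = s := by rw [hs'def, hmax, min_eq_left h1]
          rw [h2, dist_self]; exact hδ.le
        · have h2 : s' = T := by rw [hs'def, hmax, min_eq_right h1]
          rw [Real.dist_eq, h2, abs_of_nonneg (by linarith)]
          linarith [hs.2]
    have hdist : dist ((s, Int.fract x, Int.fract y) : ℝ × ℝ × ℝ)
        ((s', Int.fract x, Int.fract y) : ℝ × ℝ × ℝ) = dist s s' := by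
      simp [Prod.dist_eq, dist_nonneg]
    have hmem : ((s, Int.fract x, Int.fract y) : ℝ × ℝ × ℝ) ∈ Metric.thickening δ₀
        (Icc (0:ℝ) T ×ˢ (Icc (0:ℝ) 1 ×ˢ Icc (0:ℝ) 1)) := by
      refine Metric.mem_thickening_iff.2 ⟨(s', Int.fract x, Int.fract y),
        ⟨hs'mem, ⟨⟨Int.fract_nonneg x, (Int.fract_lt_one x).le⟩,
          ⟨Int.fract_nonneg y, (Int.fract_lt_one y).le⟩⟩⟩, ?_⟩
      rw [hdist]
      calc dist s s' ≤ δ := hds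
        _ < δ₀ := by rw [hδdef]; linarith
    have := hthick hmem
    rw [hx1, hy1]
    exact this
  intro t₀ ht₀
  have hball : ∀ s ∈ Metric.closedBall t₀ (δ/2), s ∈ Icc (-δ) (T+δ) := by
    intro s hs
    rw [Metric.mem_closedBall, Real.dist_eq, abs_le] at hs
    exact ⟨by linarith [ht₀.1], by linarith [ht₀.2]⟩
  have hZt : ∀ x y : ℝ, 0 < Z t₀ x y := fun x y => hZpos t₀ ht₀ x y
  -- continuity ingredients (4 variables, on the ball region)
  have hZcont4 : Continuous fun p : ℝ × ℝ × ℝ × ℝ => Z p.1 p.2.1 p.2.2.1 := by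
    have h : Continuous fun p : ℝ × ℝ × ℝ × ℝ => U3 Z (p.1, p.2.1, p.2.2.1) :=
      hZ.continuous.comp (by fun_prop)
    exact h
  have czA4 : Continuous fun p : ℝ × ℝ × ℝ × ℝ => p.2.2.2 ^ α := by
    have h : Continuous fun p : ℝ × ℝ × ℝ × ℝ => (fun w : ℝ => w ^ α) p.2.2.2 :=
      (cont_rpow_base hα.le).comp (by fun_prop)
    exact h
  set B := Metric.closedBall t₀ (δ/2) ×ˢ (Icc (0:ℝ) 1 ×ˢ Icc (0:ℝ) 1 ×ˢ Icc (0:ℝ) 1) with hBdef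
  have hZrpow : ∀ e : ℝ, ContinuousOn (fun p : ℝ × ℝ × ℝ × ℝ => Z p.1 p.2.1 p.2.2.1 ^ e) B := by
    intro e p hp
    exact (hZcont4.continuousAt.rpow_const
      (Or.inl (ne_of_gt (hZP p.1 (hball _ hp.1) _ _)))).continuousWithinAt
  have cqt4 : Continuous fun p : ℝ × ℝ × ℝ × ℝ => qt Z p.1 p.2.1 p.2.2.1 := by
    have h : Continuous fun p : ℝ × ℝ × ℝ × ℝ => U3 (qt Z) (p.1, p.2.1, p.2.2.1) :=
      (contDiff_qt hZ).continuous.comp (by fun_prop)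
    exact h
  have cv4 : ∀ (gg : F), CD4 gg → Continuous (U4 gg) := fun gg hgg => hgg.continuous
  -- Step 1 : differentiation under the integral sign
  have HDA : HasDerivAt
      (fun u => ∫ x in (0:ℝ)..1, ∫ y in (0:ℝ)..1, ∫ z in (0:ℝ)..1,
        z ^ α * Z u x y ^ (α+1) * v u x y z)
      (∫ x in (0:ℝ)..1, ∫ y in (0:ℝ)..1, ∫ z in (0:ℝ)..1, EE α Z v t₀ x y z) t₀ := by
    apply triple_hasDerivAt (f := fun u x y z => z ^ α * Z u x y ^ (α+1) * v u x y z)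
      (f' := EE α Z v) (by positivity : 0 < δ/2)
    · exact ((czA4.continuousOn.mul (hZrpow (α+1))).mul hv.continuous.continuousOn)
    · exact czA4.continuousOn.mul
        (((((continuous_const.continuousOn.mul (hZrpow α)).mul
            cqt4.continuousOn).mul hv.continuous.continuousOn).add
          ((hZrpow (α+1)).mul ((contDiff_pt hv).continuous.continuousOn))))
    · intro s hs x hx y hy z hz
      have hZs : 0 < Z s x y := hZP s (hball s (Metric.ball_subset_closedBall hs)) x y
      have e1 : α + 1 - 1 = α := by ring
      have hZd := hasDerivAt_qt hZ s x y
      have hp1 := hZd.rpow_const (p := α+1) (Or.inl (ne_of_gt hZs))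
      rw [e1] at hp1
      have hvd := hasDerivAt_pt hv s x y z
      have H := (hp1.const_mul (z ^ α)).mul hvd
      refine H.congr_deriv ?_
      simp only [EE]
      ring
  -- Step 2 : the space integral of EE vanishes at t₀
  have hzero : (∫ x in (0:ℝ)..1, ∫ y in (0:ℝ)..1, ∫ z in (0:ℝ)..1, EE α Z v t₀ x y z) = 0 := by
    -- fixed-time continuity in the three space variables
    have c4 : ∀ (gg : F), CD4 gg → Continuous fun p : ℝ × ℝ × ℝ => gg t₀ p.1 p.2.1 p.2.2 := by
      intro gg hgg
      have h : Continuous fun p : ℝ × ℝ × ℝ => U4 gg (t₀, p.1, p.2.1, p.2.2) :=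
        hgg.continuous.comp (by fun_prop)
      exact h
    have c3Z : Continuous fun p : ℝ × ℝ × ℝ => Z t₀ p.1 p.2.1 := by
      have h : Continuous fun p : ℝ × ℝ × ℝ => U3 Z (t₀, p.1, p.2.1) :=
        hZ.continuous.comp (by fun_prop)
      exact h
    have c3Zr : ∀ e : ℝ, Continuous fun p : ℝ × ℝ × ℝ => Z t₀ p.1 p.2.1 ^ e := fun e =>
      continuous_iff_continuousAt.2 fun p =>
        c3Z.continuousAt.rpow_const (Or.inl (ne_of_gt (hZt _ _)))
    have c3qx : Continuous fun p : ℝ × ℝ × ℝ => qx Z t₀ p.1 p.2.1 := by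
      have h : Continuous fun p : ℝ × ℝ × ℝ => U3 (qx Z) (t₀, p.1, p.2.1) :=
        (contDiff_qx hZ).continuous.comp (by fun_prop)
      exact h
    have c3qy : Continuous fun p : ℝ × ℝ × ℝ => qy Z t₀ p.1 p.2.1 := by
      have h : Continuous fun p : ℝ × ℝ × ℝ => U3 (qy Z) (t₀, p.1, p.2.1) :=
        (contDiff_qy hZ).continuous.comp (by fun_prop)
      exact h
    have c3zA : Continuous fun p : ℝ × ℝ × ℝ => p.2.2 ^ α := by
      have h : Continuous fun p : ℝ × ℝ × ℝ => (fun w : ℝ => w ^ α) p.2.2 :=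
        (cont_rpow_base hα.le).comp (by fun_prop)
      exact h
    have cPhi : Continuous fun p : ℝ × ℝ × ℝ => Phi α g μ lam a Z v1 v2 v t₀ p.1 p.2.1 p.2.2 := by
      simp only [Phi]
      exact ((((continuous_const.mul c3Z).mul (c4 (px v) (contDiff_px hv))).add
          (continuous_const.mul (c3Z.mul ((c4 (px v1) (contDiff_px hv1)).add
            (c4 (py v2) (contDiff_py hv2)))))).sub
          (((c3zA.mul (c3Zr (α+1))).mul (c4 v1 hv1)).mul (c4 v hv))).sub
          ((continuous_const.mul c3zA).mul (c3Zr (α+2)))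
    have cDPhi : Continuous fun p : ℝ × ℝ × ℝ => DPhi α g μ lam a Z v1 v2 v t₀ p.1 p.2.1 p.2.2 := by
      simp only [DPhi]
      exact (((continuous_const.mul ((c3qx.mul (c4 (px v) (contDiff_px hv))).add
          (c3Z.mul (c4 (px (px v)) (contDiff_px (contDiff_px hv)))))).add
        (continuous_const.mul ((c3qx.mul ((c4 (px v1) (contDiff_px hv1)).add
            (c4 (py v2) (contDiff_py hv2)))).add
          (c3Z.mul ((c4 (px (px v1)) (contDiff_px (contDiff_px hv1))).add
            (c4 (px (py v2)) (contDiff_px (contDiff_py hv2)))))))).sub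
        ((((((continuous_const.mul c3zA).mul (c3Zr α)).mul c3qx).mul (c4 v1 hv1)).mul
            (c4 v hv)).add
          ((c3zA.mul (c3Zr (α+1))).mul (((c4 (px v1) (contDiff_px hv1)).mul (c4 v hv)).add
            ((c4 v1 hv1).mul (c4 (px v) (contDiff_px hv))))))).sub
        ((continuous_const.mul c3zA).mul ((continuous_const.mul (c3Zr (α+1))).mul c3qx))
    have cPsi : Continuous fun p : ℝ × ℝ × ℝ => Psi α g μ lam b Z v1 v2 v t₀ p.1 p.2.1 p.2.2 := by
      simp only [Psi]
      exact ((((continuous_const.mul c3Z).mul (c4 (py v) (contDiff_py hv))).add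
          (continuous_const.mul (c3Z.mul ((c4 (px v1) (contDiff_px hv1)).add
            (c4 (py v2) (contDiff_py hv2)))))).sub
          (((c3zA.mul (c3Zr (α+1))).mul (c4 v2 hv2)).mul (c4 v hv))).sub
          ((continuous_const.mul c3zA).mul (c3Zr (α+2)))
    have cDPsi : Continuous fun p : ℝ × ℝ × ℝ => DPsi α g μ lam b Z v1 v2 v t₀ p.1 p.2.1 p.2.2 := by
      simp only [DPsi]
      exact (((continuous_const.mul ((c3qy.mul (c4 (py v) (contDiff_py hv))).add
          (c3Z.mul (c4 (py (py v)) (contDiff_py (contDiff_py hv)))))).add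
        (continuous_const.mul ((c3qy.mul ((c4 (px v1) (contDiff_px hv1)).add
            (c4 (py v2) (contDiff_py hv2)))).add
          (c3Z.mul ((c4 (py (px v1)) (contDiff_py (contDiff_px hv1))).add
            (c4 (py (py v2)) (contDiff_py (contDiff_py hv2)))))))).sub
        ((((((continuous_const.mul c3zA).mul (c3Zr α)).mul c3qy).mul (c4 v2 hv2)).mul
            (c4 v hv)).add
          ((c3zA.mul (c3Zr (α+1))).mul (((c4 (py v2) (contDiff_py hv2)).mul (c4 v hv)).add
            ((c4 v2 hv2).mul (c4 (py v) (contDiff_py hv))))))).sub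
        ((continuous_const.mul c3zA).mul ((continuous_const.mul (c3Zr (α+1))).mul c3qy))
    -- z-slice continuity of DTh
    have hcd : CD4 (divh v1 v2) := (contDiff_px hv1).add (contDiff_py hv2)
    have ccum : ∀ (gg : F), CD4 gg → ∀ x y : ℝ, Continuous fun z => cum α gg t₀ x y z := by
      intro gg hgg x y
      exact continuous_iff_continuousAt.2 fun z =>
        ((((cont_rpow_base hα.le).mul (cont_slice_z hgg t₀ x y)).integral_hasStrictDerivAt
          0 z).hasDerivAt.continuousAt)
    have cDTh_z : ∀ x y : ℝ, Continuous fun z => DTh α μ Z v1 v2 v t₀ x y z := by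
      intro x y
      simp only [DTh, Theta]
      have czαz : Continuous fun z : ℝ => z ^ α := cont_rpow_base hα.le
      have cz1 : Continuous fun z : ℝ => z ^ (α+1) := cont_rpow_base (by linarith)
      exact ((continuous_const.mul (cont_slice_z (contDiff_pz (contDiff_pz hv)) t₀ x y)).sub
        ((continuous_const.mul
          ((((continuous_const.mul czαz).mul continuous_const).sub
            (continuous_const.mul
              ((((czαz.mul (cont_slice_z hv1 t₀ x y)).mul continuous_const)).add
                ((czαz.mul (cont_slice_z hv2 t₀ x y)).mul continuous_const)))).sub
            ((czαz.mul (cont_slice_z hcd t₀ x y)).mul continuous_const))).mul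
          (cont_slice_z hv t₀ x y))).sub
        ((continuous_const.mul
          (((cz1.mul continuous_const).sub
            (continuous_const.mul
              (((ccum v1 hv1 x y).mul continuous_const).add
                ((ccum v2 hv2 x y).mul continuous_const)))).sub
            ((ccum (divh v1 v2) hcd x y).mul continuous_const))).mul
          (cont_slice_z (contDiff_pz hv) t₀ x y))
    -- (a) the z-integral of DTh vanishes
    have hza : ∀ x y : ℝ, (∫ z in (0:ℝ)..1, DTh α μ Z v1 v2 v t₀ x y z) = 0 := by
      intro x y
      have hftc := intervalIntegral.integral_eq_sub_of_hasDerivAt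
        (f := fun w => ThFlux α μ Z v1 v2 v t₀ x y w) (f' := fun z => DTh α μ Z v1 v2 v t₀ x y z)
        (fun z _ => hasDerivAt_ThFlux hα hZ hv1 hv2 hv t₀ x y z)
        ((cDTh_z x y).intervalIntegrable 0 1)
      rw [hftc]
      simp only [ThFlux_one hα hZ hv1 hv2 hv t₀ x y (hbc1 t₀ ht₀ x y),
        ThFlux_zero hα hZ hv1 hv2 hv t₀ x y (hbc0 t₀ ht₀ x y), sub_zero]
    -- integrability of z-slices
    have iDPhi : ∀ x y : ℝ, IntervalIntegrable (fun z => DPhi α g μ lam a Z v1 v2 v t₀ x y z) volume 0 1 := by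
      intro x y
      have h := cDPhi.comp (show Continuous fun z : ℝ => ((x, y, z) : ℝ × ℝ × ℝ) by fun_prop)
      exact (h : Continuous fun z : ℝ => DPhi α g μ lam a Z v1 v2 v t₀ x y z).intervalIntegrable 0 1
    have iDPsi : ∀ x y : ℝ, IntervalIntegrable (fun z => DPsi α g μ lam b Z v1 v2 v t₀ x y z) volume 0 1 := by
      intro x y
      have h := cDPsi.comp (show Continuous fun z : ℝ => ((x, y, z) : ℝ × ℝ × ℝ) by fun_prop)
      exact (h : Continuous fun z : ℝ => DPsi α g μ lam b Z v1 v2 v t₀ x y z).intervalIntegrable 0 1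
    -- z-integral identity
    have key : ∀ x y : ℝ, (∫ z in (0:ℝ)..1, EE α Z v t₀ x y z)
        = (∫ z in (0:ℝ)..1, DPhi α g μ lam a Z v1 v2 v t₀ x y z) + (∫ z in (0:ℝ)..1, DPsi α g μ lam b Z v1 v2 v t₀ x y z) := by
      intro x y
      have h1 : (∫ z in (0:ℝ)..1, EE α Z v t₀ x y z)
          = ∫ z in (0:ℝ)..1, (DPhi α g μ lam a Z v1 v2 v t₀ x y z + DPsi α g μ lam b Z v1 v2 v t₀ x y z + DTh α μ Z v1 v2 v t₀ x y z) := by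
        apply intervalIntegral.integral_congr
        intro z hz
        rw [uIcc_of_le (by norm_num : (0:ℝ) ≤ 1)] at hz
        exact pointwise_identity hα hZ hv1 hv2 hv t₀ x y z (hZt x y)
          (hmass t₀ ht₀ x y) (hweq t₀ ht₀ x y z hz) (heqn t₀ ht₀ x y z hz)
      rw [h1, intervalIntegral.integral_add ((iDPhi x y).add (iDPsi x y))
          ((cDTh_z x y).intervalIntegrable 0 1),
        intervalIntegral.integral_add (iDPhi x y) (iDPsi x y), hza x y, add_zero]
    -- y-level integrability
    have iYDPhi : ∀ x : ℝ, IntervalIntegrable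
        (fun y => ∫ z in (0:ℝ)..1, DPhi α g μ lam a Z v1 v2 v t₀ x y z) volume 0 1 := by
      intro x
      apply ContinuousOn.intervalIntegrable
      apply contOn_param isCompact_uIcc
      have h := cDPhi.comp (show Continuous fun p : ℝ × ℝ => ((x, p.1, p.2) : ℝ × ℝ × ℝ) by fun_prop)
      exact (h : Continuous fun p : ℝ × ℝ => DPhi α g μ lam a Z v1 v2 v t₀ x p.1 p.2).continuousOn
    have iYDPsi : ∀ x : ℝ, IntervalIntegrable
        (fun y => ∫ z in (0:ℝ)..1, DPsi α g μ lam b Z v1 v2 v t₀ x y z) volume 0 1 := by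
      intro x
      apply ContinuousOn.intervalIntegrable
      apply contOn_param isCompact_uIcc
      have h := cDPsi.comp (show Continuous fun p : ℝ × ℝ => ((x, p.1, p.2) : ℝ × ℝ × ℝ) by fun_prop)
      exact (h : Continuous fun p : ℝ × ℝ => DPsi α g μ lam b Z v1 v2 v t₀ x p.1 p.2).continuousOn
    -- FTC in y for Psi
    have hdy : ∀ x y : ℝ, HasDerivAt (fun u => ∫ z in (0:ℝ)..1, Psi α g μ lam b Z v1 v2 v t₀ x u z)
        (∫ z in (0:ℝ)..1, DPsi α g μ lam b Z v1 v2 v t₀ x y z) y := by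
      intro x y
      apply param_hasDerivAt (Fu := fun u z => Psi α g μ lam b Z v1 v2 v t₀ x u z)
        (Fu' := fun u z => DPsi α g μ lam b Z v1 v2 v t₀ x u z) one_pos
      · have h := cPsi.comp (show Continuous fun p : ℝ × ℝ => ((x, p.1, p.2) : ℝ × ℝ × ℝ) by fun_prop)
        exact (h : Continuous fun p : ℝ × ℝ => Psi α g μ lam b Z v1 v2 v t₀ x p.1 p.2).continuousOn
      · have h := cDPsi.comp (show Continuous fun p : ℝ × ℝ => ((x, p.1, p.2) : ℝ × ℝ × ℝ) by fun_prop)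
        exact (h : Continuous fun p : ℝ × ℝ => DPsi α g μ lam b Z v1 v2 v t₀ x p.1 p.2).continuousOn
      · intro u _ z _
        exact hasDerivAt_Psi hα hZ hv1 hv2 hv t₀ x u z (hZt x u)
    have perPsiY : ∀ x z : ℝ, Psi α g μ lam b Z v1 v2 v t₀ x 1 z = Psi α g μ lam b Z v1 v2 v t₀ x 0 z := by
      intro x z
      have hyper : ∀ y, Psi α g μ lam b Z v1 v2 v t₀ x (y+1) z = Psi α g μ lam b Z v1 v2 v t₀ x y z := by
        intro y
        simp only [Psi]
        rw [hperZy t₀ x y, per_py_y hpervy t₀ x y z, per_px_y hperv1y t₀ x y z,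
          per_py_y hperv2y t₀ x y z, hperv2y t₀ x y z, hpervy t₀ x y z]
      have h := hyper 0
      rwa [zero_add] at h
    have hyint0 : ∀ x : ℝ, (∫ y in (0:ℝ)..1, ∫ z in (0:ℝ)..1, DPsi α g μ lam b Z v1 v2 v t₀ x y z) = 0 := by
      intro x
      have hftc := intervalIntegral.integral_eq_sub_of_hasDerivAt
        (f := fun y => ∫ z in (0:ℝ)..1, Psi α g μ lam b Z v1 v2 v t₀ x y z)
        (f' := fun y => ∫ z in (0:ℝ)..1, DPsi α g μ lam b Z v1 v2 v t₀ x y z)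
        (fun y _ => hdy x y) (iYDPsi x)
      rw [hftc]
      show (∫ z in (0:ℝ)..1, Psi α g μ lam b Z v1 v2 v t₀ x 1 z)
          - (∫ z in (0:ℝ)..1, Psi α g μ lam b Z v1 v2 v t₀ x 0 z) = 0
      rw [intervalIntegral.integral_congr
        (g := fun z => Psi α g μ lam b Z v1 v2 v t₀ x 0 z) (fun z _ => perPsiY x z), sub_self]
    have keyY : ∀ x : ℝ, (∫ y in (0:ℝ)..1, ∫ z in (0:ℝ)..1, EE α Z v t₀ x y z)
        = ∫ y in (0:ℝ)..1, ∫ z in (0:ℝ)..1, DPhi α g μ lam a Z v1 v2 v t₀ x y z := by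
      intro x
      have h1 : (∫ y in (0:ℝ)..1, ∫ z in (0:ℝ)..1, EE α Z v t₀ x y z)
          = ∫ y in (0:ℝ)..1, ((∫ z in (0:ℝ)..1, DPhi α g μ lam a Z v1 v2 v t₀ x y z)
              + (∫ z in (0:ℝ)..1, DPsi α g μ lam b Z v1 v2 v t₀ x y z)) :=
        intervalIntegral.integral_congr (fun y _ => key x y)
      rw [h1, intervalIntegral.integral_add (iYDPhi x) (iYDPsi x), hyint0 x, add_zero]
    -- x-level
    have iXDPhi : IntervalIntegrable
        (fun x => ∫ y in (0:ℝ)..1, ∫ z in (0:ℝ)..1, DPhi α g μ lam a Z v1 v2 v t₀ x y z) volume 0 1 := by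
      apply ContinuousOn.intervalIntegrable
      apply contOn_param isCompact_uIcc
      apply contOn_param (isCompact_uIcc.prod isCompact_Icc)
      have h := cDPhi.comp
        (show Continuous fun q : (ℝ × ℝ) × ℝ => ((q.1.1, q.1.2, q.2) : ℝ × ℝ × ℝ) by fun_prop)
      exact (h : Continuous fun q : (ℝ × ℝ) × ℝ => DPhi α g μ lam a Z v1 v2 v t₀ q.1.1 q.1.2 q.2).continuousOn
    have hdx : ∀ x : ℝ, HasDerivAt
        (fun u => ∫ y in (0:ℝ)..1, ∫ z in (0:ℝ)..1, Phi α g μ lam a Z v1 v2 v t₀ u y z)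
        (∫ y in (0:ℝ)..1, ∫ z in (0:ℝ)..1, DPhi α g μ lam a Z v1 v2 v t₀ x y z) x := by
      intro x
      apply param_hasDerivAt (Fu := fun u y => ∫ z in (0:ℝ)..1, Phi α g μ lam a Z v1 v2 v t₀ u y z)
        (Fu' := fun u y => ∫ z in (0:ℝ)..1, DPhi α g μ lam a Z v1 v2 v t₀ u y z) one_pos
      · apply contOn_param ((isCompact_closedBall x 1).prod isCompact_Icc)
        have h := cPhi.comp
          (show Continuous fun q : (ℝ × ℝ) × ℝ => ((q.1.1, q.1.2, q.2) : ℝ × ℝ × ℝ) by fun_prop)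
        exact (h : Continuous fun q : (ℝ × ℝ) × ℝ => Phi α g μ lam a Z v1 v2 v t₀ q.1.1 q.1.2 q.2).continuousOn
      · apply contOn_param ((isCompact_closedBall x 1).prod isCompact_Icc)
        have h := cDPhi.comp
          (show Continuous fun q : (ℝ × ℝ) × ℝ => ((q.1.1, q.1.2, q.2) : ℝ × ℝ × ℝ) by fun_prop)
        exact (h : Continuous fun q : (ℝ × ℝ) × ℝ => DPhi α g μ lam a Z v1 v2 v t₀ q.1.1 q.1.2 q.2).continuousOn
      · intro u _ y _
        apply param_hasDerivAt (Fu := fun w z => Phi α g μ lam a Z v1 v2 v t₀ w y z)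
          (Fu' := fun w z => DPhi α g μ lam a Z v1 v2 v t₀ w y z) one_pos
        · have h := cPhi.comp
            (show Continuous fun p : ℝ × ℝ => ((p.1, y, p.2) : ℝ × ℝ × ℝ) by fun_prop)
          exact (h : Continuous fun p : ℝ × ℝ => Phi α g μ lam a Z v1 v2 v t₀ p.1 y p.2).continuousOn
        · have h := cDPhi.comp
            (show Continuous fun p : ℝ × ℝ => ((p.1, y, p.2) : ℝ × ℝ × ℝ) by fun_prop)
          exact (h : Continuous fun p : ℝ × ℝ => DPhi α g μ lam a Z v1 v2 v t₀ p.1 y p.2).continuousOn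
        · intro w _ z _
          exact hasDerivAt_Phi hα hZ hv1 hv2 hv t₀ w y z (hZt w y)
    have perPhiX : ∀ y z : ℝ, Phi α g μ lam a Z v1 v2 v t₀ 1 y z = Phi α g μ lam a Z v1 v2 v t₀ 0 y z := by
      intro y z
      have hyper : ∀ x, Phi α g μ lam a Z v1 v2 v t₀ (x+1) y z = Phi α g μ lam a Z v1 v2 v t₀ x y z := by
        intro x
        simp only [Phi]
        rw [hperZx t₀ x y, per_px_x hpervx t₀ x y z, per_px_x hperv1x t₀ x y z,
          per_py_x hperv2x t₀ x y z, hperv1x t₀ x y z, hpervx t₀ x y z]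
      have h := hyper 0
      rwa [zero_add] at h
    have hftcX := intervalIntegral.integral_eq_sub_of_hasDerivAt
      (f := fun x => ∫ y in (0:ℝ)..1, ∫ z in (0:ℝ)..1, Phi α g μ lam a Z v1 v2 v t₀ x y z)
      (f' := fun x => ∫ y in (0:ℝ)..1, ∫ z in (0:ℝ)..1, DPhi α g μ lam a Z v1 v2 v t₀ x y z)
      (fun x _ => hdx x) iXDPhi
    calc (∫ x in (0:ℝ)..1, ∫ y in (0:ℝ)..1, ∫ z in (0:ℝ)..1, EE α Z v t₀ x y z)
        = ∫ x in (0:ℝ)..1, ∫ y in (0:ℝ)..1, ∫ z in (0:ℝ)..1, DPhi α g μ lam a Z v1 v2 v t₀ x y z :=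
          intervalIntegral.integral_congr (fun x _ => keyY x)
      _ = (∫ y in (0:ℝ)..1, ∫ z in (0:ℝ)..1, Phi α g μ lam a Z v1 v2 v t₀ 1 y z)
          - (∫ y in (0:ℝ)..1, ∫ z in (0:ℝ)..1, Phi α g μ lam a Z v1 v2 v t₀ 0 y z) := hftcX
      _ = 0 := by
          rw [intervalIntegral.integral_congr
            (g := fun y => ∫ z in (0:ℝ)..1, Phi α g μ lam a Z v1 v2 v t₀ 0 y z)
            (fun y _ => intervalIntegral.integral_congr (fun z _ => perPhiX y z)), sub_self]

  rw [hzero] at HDA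
  exact HDA

end component


/-- conservation of momentum for the conservative model. -/
theorem momentum_conservation
    (γ g μ lam α : ℝ) (hγ : 1 < γ) (hg : 0 < g) (hμ : 0 < μ) (hlam : 0 < lam)
    (hα : α = 1 / (γ - 1)) :
    ∀ (T : ℝ) (Z : G) (v1 v2 W : F), 0 ≤ T →
      IsSol α g μ lam (Icc 0 T) Z v1 v2 W →
      (∀ t ∈ Icc (0:ℝ) T,
        I3 (fun x y z => z ^ α * (Z t x y) ^ (α+1) * v1 t x y z)
            = I3 (fun x y z => z ^ α * (Z 0 x y) ^ (α+1) * v1 0 x y z) ∧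
        I3 (fun x y z => z ^ α * (Z t x y) ^ (α+1) * v2 t x y z)
            = I3 (fun x y z => z ^ α * (Z 0 x y) ^ (α+1) * v2 0 x y z)) ∧
      (∀ t ∈ Ioo (0:ℝ) T,
        deriv (fun s => I3 (fun x y z => z ^ α * (Z s x y) ^ (α+1) * v1 s x y z)) t = 0 ∧
        deriv (fun s => I3 (fun x y z => z ^ α * (Z s x y) ^ (α+1) * v2 s x y z)) t = 0) := by
  intro T Z v1 v2 W hT hsol
  have hγ1 : (0:ℝ) < γ - 1 := by linarith
  have hα0 : 0 < α := by rw [hα]; positivity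
  have hZc : CD3 Z := hsol.smooth.smooth_Z
  have hv1c : CD4 v1 := hsol.smooth.smooth_v1
  have hv2c : CD4 v2 := hsol.smooth.smooth_v2
  -- divergence-free form of the two momentum equations
  have heq1 : ∀ t ∈ Icc (0:ℝ) T, ∀ x y : ℝ, ∀ z ∈ Icc (0:ℝ) 1,
      z ^ α * Z t x y ^ α * (pt v1 t x y z + v1 t x y z * px v1 t x y z
        + v2 t x y z * py v1 t x y z + W t x y z * pz v1 t x y z
        + g * ((1:ℝ) * qx Z t x y + (0:ℝ) * qy Z t x y)) * Z t x y =
      (μ * (px (px v1) t x y z + py (py v1) t x y z)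
        + (μ+lam) * ((1:ℝ) * (px (px v1) t x y z + px (py v2) t x y z)
            + (0:ℝ) * (py (px v1) t x y z + py (py v2) t x y z))
        + μ * pz (pz v1) t x y z) * Z t x y
      + μ * (qx Z t x y * px v1 t x y z + qy Z t x y * py v1 t x y z)
      + (μ+lam) * (px v1 t x y z + py v2 t x y z)
          * ((1:ℝ) * qx Z t x y + (0:ℝ) * qy Z t x y) := by
    intro t ht x y z hz
    have hm := hsol.mom1 t ht x y z hz
    have hZne : Z t x y ≠ 0 := ne_of_gt (hsol.Z_pos t ht x y)
    simp only [momL1, momR1] at hm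
    have hdx : px (divh v1 v2) t x y z = px (px v1) t x y z + px (py v2) t x y z :=
      ((hasDerivAt_px (contDiff_px hv1c) t x y z).add
        (hasDerivAt_px (contDiff_py hv2c) t x y z)).deriv
    have hdv : ∀ z' : ℝ, divh v1 v2 t x y z' = px v1 t x y z' + py v2 t x y z' := fun _ => rfl
    rw [hdx, hdv] at hm
    linear_combination (norm := (field_simp; ring)) Z t x y * hm
  have heq2 : ∀ t ∈ Icc (0:ℝ) T, ∀ x y : ℝ, ∀ z ∈ Icc (0:ℝ) 1,
      z ^ α * Z t x y ^ α * (pt v2 t x y z + v1 t x y z * px v2 t x y z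
        + v2 t x y z * py v2 t x y z + W t x y z * pz v2 t x y z
        + g * ((0:ℝ) * qx Z t x y + (1:ℝ) * qy Z t x y)) * Z t x y =
      (μ * (px (px v2) t x y z + py (py v2) t x y z)
        + (μ+lam) * ((0:ℝ) * (px (px v1) t x y z + px (py v2) t x y z)
            + (1:ℝ) * (py (px v1) t x y z + py (py v2) t x y z))
        + μ * pz (pz v2) t x y z) * Z t x y
      + μ * (qx Z t x y * px v2 t x y z + qy Z t x y * py v2 t x y z)
      + (μ+lam) * (px v1 t x y z + py v2 t x y z)
          * ((0:ℝ) * qx Z t x y + (1:ℝ) * qy Z t x y) := by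
    intro t ht x y z hz
    have hm := hsol.mom2 t ht x y z hz
    have hZne : Z t x y ≠ 0 := ne_of_gt (hsol.Z_pos t ht x y)
    simp only [momL2, momR2] at hm
    have hdy : py (divh v1 v2) t x y z = py (px v1) t x y z + py (py v2) t x y z :=
      ((hasDerivAt_py (contDiff_px hv1c) t x y z).add
        (hasDerivAt_py (contDiff_py hv2c) t x y z)).deriv
    have hdv : ∀ z' : ℝ, divh v1 v2 t x y z' = px v1 t x y z' + py v2 t x y z' := fun _ => rfl
    rw [hdy, hdv] at hm
    linear_combination (norm := (field_simp; ring)) Z t x y * hm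
  have comp1 := component (a := (1:ℝ)) (b := (0:ℝ)) (g := g) (μ := μ) (lam := lam)
    hα0 hZc hv1c hv2c hv1c hT
    hsol.smooth.per_Z_x hsol.smooth.per_Z_y
    hsol.smooth.per_v1_x hsol.smooth.per_v1_y hsol.smooth.per_v2_x hsol.smooth.per_v2_y
    hsol.smooth.per_v1_x hsol.smooth.per_v1_y
    hsol.Z_pos heq1 hsol.mass hsol.weq
    (fun t ht x y => (hsol.bc_v_z0 t ht x y).1) (fun t ht x y => (hsol.bc_v_z1 t ht x y).1)
  have comp2 := component (a := (0:ℝ)) (b := (1:ℝ)) (g := g) (μ := μ) (lam := lam)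
    hα0 hZc hv1c hv2c hv2c hT
    hsol.smooth.per_Z_x hsol.smooth.per_Z_y
    hsol.smooth.per_v1_x hsol.smooth.per_v1_y hsol.smooth.per_v2_x hsol.smooth.per_v2_y
    hsol.smooth.per_v2_x hsol.smooth.per_v2_y
    hsol.Z_pos heq2 hsol.mass hsol.weq
    (fun t ht x y => (hsol.bc_v_z0 t ht x y).2) (fun t ht x y => (hsol.bc_v_z1 t ht x y).2)
  have const1 : ∀ t ∈ Icc (0:ℝ) T,
      I3 (fun x y z => z ^ α * (Z t x y) ^ (α+1) * v1 t x y z)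
        = I3 (fun x y z => z ^ α * (Z 0 x y) ^ (α+1) * v1 0 x y z) := by
    intro t ht
    have hder : ∀ s ∈ uIcc (0:ℝ) t,
        HasDerivAt (fun s => I3 fun x y z => z ^ α * Z s x y ^ (α+1) * v1 s x y z)
          ((fun _ : ℝ => (0:ℝ)) s) s := by
      intro s hs
      rw [uIcc_of_le ht.1] at hs
      exact comp1 s ⟨hs.1, hs.2.trans ht.2⟩
    have hftc := intervalIntegral.integral_eq_sub_of_hasDerivAt hder
      (_root_.intervalIntegrable_const (c := (0:ℝ)))
    simp only [intervalIntegral.integral_zero] at hftc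
    have := sub_eq_zero.1 hftc.symm
    exact this
  have const2 : ∀ t ∈ Icc (0:ℝ) T,
      I3 (fun x y z => z ^ α * (Z t x y) ^ (α+1) * v2 t x y z)
        = I3 (fun x y z => z ^ α * (Z 0 x y) ^ (α+1) * v2 0 x y z) := by
    intro t ht
    have hder : ∀ s ∈ uIcc (0:ℝ) t,
        HasDerivAt (fun s => I3 fun x y z => z ^ α * Z s x y ^ (α+1) * v2 s x y z)
          ((fun _ : ℝ => (0:ℝ)) s) s := by
      intro s hs
      rw [uIcc_of_le ht.1] at hs
      exact comp2 s ⟨hs.1, hs.2.trans ht.2⟩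
    have hftc := intervalIntegral.integral_eq_sub_of_hasDerivAt hder
      (_root_.intervalIntegrable_const (c := (0:ℝ)))
    simp only [intervalIntegral.integral_zero] at hftc
    have := sub_eq_zero.1 hftc.symm
    exact this
  refine ⟨fun t ht => ⟨const1 t ht, const2 t ht⟩, fun t ht =>
    ⟨(comp1 t (Ioo_subset_Icc_self ht)).deriv, (comp2 t (Ioo_subset_Icc_self ht)).deriv⟩⟩

end FBCPE
end
end
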